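/- arXiv:1005.1315 — 6 statements merged into one kernel-verified Lean document; each statement's English description precedes it below -/
import Mathlib

section
/- Compression Lemma (linear form). Suppose g ∈ SO⁰(2,1) is ε-hyperbolic. Then for all δ > 0, the set B(0, δε/4) ∩ E^{wu}(g) is contained in g(B(0, δ)). -/
noncomputable section

open Set

/-- The underlying vector space ℝ^{2,1} of Minkowski (2+1)-space `E`. -/
abbrev V : Type := Fin 3 → ℝ

/-- The Lorentzian inner product `B` of signature (2,1). -/
def mB (u v : V) : ℝ := u 0 * v 0 + u 1 * v 1 - u 2 * v 2

def Timelike (v : V) : Prop := mB v v < 0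

def UnitSpacelike (v : V) : Prop := mB v v = 1

/-- future-pointing timelike vector. -/
def FutureTimelike (v : V) : Prop := mB v v < 0 ∧ 0 < v 2

/-- The standard Euclidean norm on ℝ³. -/
def eunorm (v : V) : ℝ := Real.sqrt (v 0 ^ 2 + v 1 ^ 2 + v 2 ^ 2)

/-- The Euclidean distance ρ. -/
def ρ (p q : V) : ℝ := eunorm (p - q)

/-- Open Euclidean ball `B(x,δ)`. -/
def eball (x : V) (δ : ℝ) : Set V := {y | ρ x y < δ}

/-- Euclidean δ-neighborhood `B(S,δ)` of a set `S`. -/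
def nbhd (S : Set V) (δ : ℝ) : Set V := {y | ∃ x ∈ S, ρ x y < δ}

/-- Membership in SO⁰(2,1): a linear isometry of `B` preserving orientation
(det = 1) and time-orientation (the future cone); this characterizes the
identity component of the group of linear isometries of `B`. -/
def InSO (g : V ≃ₗ[ℝ] V) : Prop :=
  (∀ u v : V, mB (g u) (g v) = mB u v) ∧
  LinearMap.det g.toLinearMap = 1 ∧
  ∀ v : V, FutureTimelike v → FutureTimelike (g v)

/-- Membership in Isom⁰(E) = SO⁰(2,1) ⋉ ℝ³. -/
def InIsom (φ : V ≃ᵃ[ℝ] V) : Prop := InSO φ.linear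

/-- The point `u_φ = (cos φ, sin φ, 1)` on the circle S¹ of future-pointing null vectors. -/
def uph (φ : ℝ) : V := ![Real.cos φ, Real.sin φ, 1]

/-- The circle S¹ of future-pointing null vectors. -/
def circ : Set V := {u | ∃ φ : ℝ, u = uph φ}

/-- An interval (arc) `{u_φ : φ₁ < φ < φ₂}` on S¹. -/
def arc (φ₁ φ₂ : ℝ) : Set V := {u | ∃ φ : ℝ, φ₁ < φ ∧ φ < φ₂ ∧ u = uph φ}

/-- Radial projection of a future-pointing null vector back onto S¹ (divide by third
coordinate); `u ↦ nproj (g u)` is the induced action `P(g)` of `g` on S¹. -/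
def nproj (w : V) : V := (w 2)⁻¹ • w

/-- `(a,b,c)` is a positively oriented basis of ℝ³. -/
def PosOriented (a b c : V) : Prop := 0 < Matrix.det (Matrix.of ![a, b, c])

/-- `xm = x⁻(v)`, `xp = x⁺(v)`: the two points of S¹ which are B-orthogonal to the
unit-spacelike vector `v`, labeled so that `(x⁻(v), x⁺(v), v)` is positively oriented. -/
def IsNullFrame (v xm xp : V) : Prop :=
  xm ∈ circ ∧ xp ∈ circ ∧ mB xm v = 0 ∧ mB xp v = 0 ∧ xm ≠ xp ∧ PosOriented xm xp v

/-- Eigendata of a hyperbolic element of SO⁰(2,1): `xm = x⁻(g)` and `xp = x⁺(g)` are the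
eigenvectors on S¹ with eigenvalues `lam < 1 < lam⁻¹`. -/
def IsHypData (g : V ≃ₗ[ℝ] V) (lam : ℝ) (xm xp : V) : Prop :=
  0 < lam ∧ lam < 1 ∧ xm ∈ circ ∧ xp ∈ circ ∧ g xm = lam • xm ∧ g xp = lam⁻¹ • xp

/-- `g` is hyperbolic: it has eigenvalues `lam < 1 < lam⁻¹` with null eigenvectors on S¹. -/
def IsHyperbolic (g : V ≃ₗ[ℝ] V) : Prop := ∃ lam xm xp, IsHypData g lam xm xp

/-- `g` is ε-hyperbolic: it is hyperbolic and `ρ(x⁺(g), x⁻(g)) ≥ ε`. -/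
def EpsHyperbolic (g : V ≃ₗ[ℝ] V) (ε : ℝ) : Prop :=
  ∃ lam xm xp, IsHypData g lam xm xp ∧ ε ≤ ρ xp xm

/-- Hyperbolic 2-space H² (hyperboloid model: the set of future unit timelike vectors,
the canonical section of the set of timelike lines). -/
def Hyp : Set V := {v | mB v v = -1 ∧ 0 < v 2}

/-- The origin `O ∈ H²`. -/
def Opt : V := ![0, 0, 1]

/-- Hyperbolic distance on H² (arcosh of |B(x,y)| for normalized x, y). -/
def hdist (x y : V) : ℝ := Real.log (|mB x y| + Real.sqrt (mB x y ^ 2 - 1))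

/-- The half-plane `H_v ⊂ H²` determined by a unit-spacelike vector `v`. -/
def halfPlane (v : V) : Set V := {u | u ∈ Hyp ∧ 0 < mB u v}

/-- The geodesic `l_v ⊂ H²` determined by a unit-spacelike vector `v`. -/
def geo (v : V) : Set V := {u | u ∈ Hyp ∧ mB u v = 0}

/-- The crooked plane `C₀` with vertex the origin directed by `e₁ = (1,0,0)`. -/
def C0 : Set V :=
  {u | u 0 = 0 ∧ |u 1| ≤ |u 2|} ∪
  {u | u 0 ≤ 0 ∧ u 1 = u 2} ∪
  {u | 0 ≤ u 0 ∧ u 1 = -u 2}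

/-- The open crooked half-space `H₀` bounded by `C₀`. -/
def H0 : Set V :=
  {u | 0 < u 0 ∧ 0 < u 1 + u 2} ∪
  {u | u 0 = 0 ∧ 0 < u 1 + u 2 ∧ 0 < u 2 - u 1} ∪
  {u | u 0 < 0 ∧ 0 < u 2 - u 1}

/-- `S` is a crooked plane `C(u,p) = p + g(C₀)` for some `g ∈ SO⁰(2,1)`. -/
def IsCrookedPlane (S : Set V) : Prop :=
  ∃ (g : V ≃ₗ[ℝ] V) (p : V), InSO g ∧ S = (fun x => p + g x) '' C0

/-- `H` is a crooked half-space `H(u,p) = p + g(H₀)` for some `g ∈ SO⁰(2,1)`. -/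
def IsCrookedHalfSpace (H : Set V) : Prop :=
  ∃ (g : V ≃ₗ[ℝ] V) (p : V), InSO g ∧ H = (fun x => p + g x) '' H0

/-- Signed generator: `g^+ = g`, `g^- = g⁻¹` (Bool `true` = `+`, `false` = `−`). -/
def sgen {G : Type*} [Group G] (g : G) (j : Bool) : G := if j then g else g⁻¹

/-- A word `w 0, …, w l` in the letters `(i,j)` (meaning `h_i^j`) is reduced:
`(i_{k+1}, j_{k+1}) ≠ (i_k, −j_k)` for all `k < l`. -/
def ReducedWord {m : ℕ} (l : ℕ) (w : ℕ → Fin m × Bool) : Prop :=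
  ∀ k, k < l → ¬((w (k + 1)).1 = (w k).1 ∧ (w (k + 1)).2 = !(w k).2)

/-- An affine Schottky configuration. -/
structure AffSchottky (m : ℕ) where
  hm : 2 ≤ m
  h : Fin m → V ≃ᵃ[ℝ] V
  hIsom : ∀ i, InIsom (h i)
  H : Fin m → Bool → Set V
  hCrooked : ∀ i j, IsCrookedHalfSpace (H i j)
  hDisj : ∀ i j i' j', (i, j) ≠ (i', j') → Disjoint (H i j) (H i' j')
  hPair : ∀ i, ⇑(h i) '' H i false = (closure (H i true))ᶜ

namespace AffSchottky

variable {m : ℕ} (S : AffSchottky m)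

/-- The crooked polyhedron `X = E − ⋃ closure(H_i^j)`. -/
def X : Set V := (⋃ i, ⋃ j, closure (S.H i j))ᶜ

/-- The affine Schottky group Γ generated by `h₁, …, h_m`. -/
def Γ : Subgroup (V ≃ᵃ[ℝ] V) := Subgroup.closure (Set.range S.h)

/-- The signed generators `h_i^j`. -/
def hp (i : Fin m) (j : Bool) : V ≃ᵃ[ℝ] V := sgen (S.h i) j

/-- `wprod w k = h_{i₀}^{j₀} ⋯ h_{i_{k-1}}^{j_{k-1}}` where `w t = (i_t, j_t)`. -/
def wprod (w : ℕ → Fin m × Bool) (k : ℕ) : V ≃ᵃ[ℝ] V :=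
  ((List.range k).map fun t => S.hp (w t).1 (w t).2).prod

end AffSchottky

/-- A (linear) Schottky configuration. -/
structure LinSchottky (m : ℕ) where
  hm : 2 ≤ m
  g : Fin m → V ≃ₗ[ℝ] V
  hSO : ∀ i, InSO (g i)
  a : Fin m → Bool → ℝ
  b : Fin m → Bool → ℝ
  hab : ∀ i j, a i j < b i j ∧ b i j - a i j < 2 * Real.pi
  hDisjCl : ∀ i j i' j', (i, j) ≠ (i', j') →
    Disjoint (closure (arc (a i j) (b i j))) (closure (arc (a i' j') (b i' j')))
  hPair : ∀ i, (fun u => nproj (g i u)) '' arc (a i false) (b i false) =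
    circ \ closure (arc (a i true) (b i true))
  hPairInv : ∀ i, (fun u => nproj ((g i)⁻¹ u)) '' arc (a i true) (b i true) =
    circ \ closure (arc (a i false) (b i false))

namespace LinSchottky

variable {m : ℕ} (S : LinSchottky m)

/-- The intervals `A_i^j ⊂ S¹`. -/
def A (i : Fin m) (j : Bool) : Set V := arc (S.a i j) (S.b i j)

/-- The Schottky group `G` generated by `g₁, …, g_m`. -/
def G : Subgroup (V ≃ₗ[ℝ] V) := Subgroup.closure (Set.range S.g)

/-- The signed generators `g_i^j`. -/
def gp (i : Fin m) (j : Bool) : V ≃ₗ[ℝ] V := sgen (S.g i) j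

/-- `wprod w k = g_{i₀}^{j₀} ⋯ g_{i_{k-1}}^{j_{k-1}}` where `w t = (i_t, j_t)`. -/
def wprod (w : ℕ → Fin m × Bool) (k : ℕ) : V ≃ₗ[ℝ] V :=
  ((List.range k).map fun t => S.gp (w t).1 (w t).2).prod

end LinSchottky

/-- Given directing unit-spacelike vectors `v i j` of the half-planes `H_i^j`, the
fundamental polygon `Δ = H² − ⋃ closure(H_i^j)` (closures taken in H²). -/
def linΔ {m : ℕ} (v : Fin m → Bool → V) : Set V :=
  Hyp \ ⋃ i, ⋃ j, Hyp ∩ closure (halfPlane (v i j))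

lemma eunorm_nonneg' (v : V) : 0 ≤ eunorm v := Real.sqrt_nonneg _

lemma eunorm_sq' (v : V) : eunorm v ^ 2 = v 0 ^ 2 + v 1 ^ 2 + v 2 ^ 2 := by
  rw [eunorm, Real.sq_sqrt]; positivity

lemma eunorm_smul' (c : ℝ) (v : V) : eunorm (c • v) = |c| * eunorm v := by
  unfold eunorm
  simp only [Pi.smul_apply, smul_eq_mul]
  rw [show (c * v 0) ^ 2 + (c * v 1) ^ 2 + (c * v 2) ^ 2
      = c ^ 2 * (v 0 ^ 2 + v 1 ^ 2 + v 2 ^ 2) by ring,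
    Real.sqrt_mul (sq_nonneg c), Real.sqrt_sq_eq_abs]

lemma eunorm_add_le' (u v : V) : eunorm (u + v) ≤ eunorm u + eunorm v := by
  have hu := eunorm_sq' u
  have hv := eunorm_sq' v
  have hu0 := eunorm_nonneg' u
  have hv0 := eunorm_nonneg' v
  have cs : (u 0 * v 0 + u 1 * v 1 + u 2 * v 2) ^ 2 ≤ (eunorm u * eunorm v) ^ 2 := by
    rw [mul_pow, hu, hv]
    nlinarith [sq_nonneg (u 0 * v 1 - u 1 * v 0), sq_nonneg (u 0 * v 2 - u 2 * v 0),
      sq_nonneg (u 1 * v 2 - u 2 * v 1)]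
  have hdot : u 0 * v 0 + u 1 * v 1 + u 2 * v 2 ≤ eunorm u * eunorm v := by
    nlinarith [mul_nonneg hu0 hv0]
  have h1 : eunorm (u + v) ^ 2 ≤ (eunorm u + eunorm v) ^ 2 := by
    rw [eunorm_sq']
    simp only [Pi.add_apply]
    nlinarith
  have h2 := eunorm_nonneg' (u + v)
  nlinarith

lemma rho_zero_left (v : V) : ρ 0 v = eunorm v := by
  unfold ρ eunorm
  congr 1
  simp only [Pi.sub_apply, Pi.zero_apply]
  ring

set_option maxHeartbeats 1000000 in
/-- Compression Lemma (linear form). If `g ∈ SO⁰(2,1)` is ε-hyperbolic, then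
for all `δ > 0`, `B(0, δε/4) ∩ E^{wu}(g) ⊆ g(B(0, δ))`, where `E^{wu}(g) = span{x⁰(g), x⁺(g)}`. -/
theorem stmt4 (g : V ≃ₗ[ℝ] V) (hg : InSO g) (lam : ℝ) (xm xp x0 : V)
    (hd : IsHypData g lam xm xp) (hx0 : UnitSpacelike x0) (hgx0 : g x0 = x0)
    (hor : PosOriented xm xp x0) (ε : ℝ) (hε : ε ≤ ρ xp xm) (δ : ℝ) (hδ : 0 < δ) :
    eball 0 (δ * ε / 4) ∩ (Submodule.span ℝ ({x0, xp} : Set V) : Set V) ⊆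
      ⇑g '' eball 0 δ := by
  obtain ⟨hlam0, hlam1, hxmc, hxpc, hgxm, hgxp⟩ := hd
  have hlamne : lam ≠ 0 := ne_of_gt hlam0
  intro w hw
  obtain ⟨hwball, hwspan⟩ := hw
  obtain ⟨a, b, hab⟩ := Submodule.mem_span_pair.mp (SetLike.mem_coe.mp hwspan)
  have hW : eunorm w < δ * ε / 4 := by
    have h0 : ρ 0 w = eunorm w := rho_zero_left w
    have h1 : ρ 0 w < δ * ε / 4 := hwball
    linarith only [h0, h1]
  have hW0 : 0 ≤ eunorm w := eunorm_nonneg' w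
  have hε0 : 0 < ε := by
    by_contra h
    push_neg at h
    have h1 : δ * ε ≤ 0 := mul_nonpos_of_nonneg_of_nonpos hδ.le h
    linarith only [h1, hW, hW0]
  obtain ⟨φ, hφ⟩ := hxpc
  obtain ⟨ψ, hψ⟩ := hxmc
  have hxp0 : xp 0 = Real.cos φ := by rw [hφ]; rfl
  have hxp1 : xp 1 = Real.sin φ := by rw [hφ]; rfl
  have hxp2 : xp 2 = 1 := by rw [hφ]; rfl
  have hxm0 : xm 0 = Real.cos ψ := by rw [hψ]; rfl
  have hxm1 : xm 1 = Real.sin ψ := by rw [hψ]; rfl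
  have hxm2 : xm 2 = 1 := by rw [hψ]; rfl
  have hP1 : Real.cos φ ^ 2 + Real.sin φ ^ 2 = 1 := Real.cos_sq_add_sin_sq φ
  have hQ1 : Real.cos ψ ^ 2 + Real.sin ψ ^ 2 = 1 := Real.cos_sq_add_sin_sq ψ
  have hP3 : x0 0 ^ 2 + x0 1 ^ 2 - x0 2 ^ 2 = 1 := by
    have h1 : x0 0 * x0 0 + x0 1 * x0 1 - x0 2 * x0 2 = 1 := hx0
    linarith only [h1]
  have hOp : mB x0 xp = 0 := by
    have h1 := hg.1 x0 xp
    rw [hgx0, hgxp] at h1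
    have h2 : mB x0 (lam⁻¹ • xp) = lam⁻¹ * mB x0 xp := by
      unfold mB
      simp only [Pi.smul_apply, smul_eq_mul]
      ring
    rw [h2] at h1
    have h3 : lam * (lam⁻¹ * mB x0 xp) = lam * mB x0 xp := by rw [h1]
    rw [← mul_assoc, mul_inv_cancel₀ hlamne, one_mul] at h3
    have h4 : (1 - lam) * mB x0 xp = 0 := by linarith only [h3]
    rcases mul_eq_zero.mp h4 with h | h
    · exfalso; linarith only [h, hlam1]
    · exact h
  have hOm : mB x0 xm = 0 := by
    have h1 := hg.1 x0 xm
    rw [hgx0, hgxm] at h1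
    have h2 : mB x0 (lam • xm) = lam * mB x0 xm := by
      unfold mB
      simp only [Pi.smul_apply, smul_eq_mul]
      ring
    rw [h2] at h1
    have h4 : (1 - lam) * mB x0 xm = 0 := by linarith only [h1]
    rcases mul_eq_zero.mp h4 with h | h
    · exfalso; linarith only [h, hlam1]
    · exact h
  have hP2 : x0 0 * Real.cos φ + x0 1 * Real.sin φ - x0 2 = 0 := by
    have h1 : x0 0 * xp 0 + x0 1 * xp 1 - x0 2 * xp 2 = 0 := hOp
    rw [hxp0, hxp1, hxp2] at h1
    linarith only [h1]
  have hQ2 : x0 0 * Real.cos ψ + x0 1 * Real.sin ψ - x0 2 = 0 := by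
    have h1 : x0 0 * xm 0 + x0 1 * xm 1 - x0 2 * xm 2 = 0 := hOm
    rw [hxm0, hxm1, hxm2] at h1
    linarith only [h1]
  have hw0 : w 0 = a * x0 0 + b * Real.cos φ := by
    rw [← hab]; simp only [Pi.add_apply, Pi.smul_apply, smul_eq_mul, hxp0]
  have hw1 : w 1 = a * x0 1 + b * Real.sin φ := by
    rw [← hab]; simp only [Pi.add_apply, Pi.smul_apply, smul_eq_mul, hxp1]
  have hw2 : w 2 = a * x0 2 + b := by
    rw [← hab]; simp only [Pi.add_apply, Pi.smul_apply, smul_eq_mul, hxp2]; ring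
  have hε2sq : ε ^ 2 ≤ (Real.cos φ - Real.cos ψ) ^ 2 + (Real.sin φ - Real.sin ψ) ^ 2 := by
    have hρ : ρ xp xm = Real.sqrt ((Real.cos φ - Real.cos ψ) ^ 2
        + (Real.sin φ - Real.sin ψ) ^ 2 + (1 - 1) ^ 2) := by
      unfold ρ eunorm
      simp only [Pi.sub_apply, hxp0, hxp1, hxp2, hxm0, hxm1, hxm2]
    have hS0 : (0:ℝ) ≤ (Real.cos φ - Real.cos ψ) ^ 2
        + (Real.sin φ - Real.sin ψ) ^ 2 + (1 - 1) ^ 2 := by positivity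
    have h1 : ε ^ 2 ≤ (ρ xp xm) ^ 2 := pow_le_pow_left₀ hε0.le hε 2
    rw [hρ, Real.sq_sqrt hS0] at h1
    linarith only [h1]
  have hsum : (Real.cos φ + Real.cos ψ) ^ 2 + (Real.sin φ + Real.sin ψ) ^ 2
      = 2 + 2 * (Real.cos φ * Real.cos ψ + Real.sin φ * Real.sin ψ) := by
    linear_combination hP1 + hQ1
  have hdiff : (Real.cos φ - Real.cos ψ) ^ 2 + (Real.sin φ - Real.sin ψ) ^ 2
      = 2 - 2 * (Real.cos φ * Real.cos ψ + Real.sin φ * Real.sin ψ) := by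
    linear_combination hP1 + hQ1
  have hcle : Real.cos φ * Real.cos ψ + Real.sin φ * Real.sin ψ ≤ 1 := by
    linarith only [hdiff, sq_nonneg (Real.cos φ - Real.cos ψ), sq_nonneg (Real.sin φ - Real.sin ψ)]
  have hε2sq' : ε ^ 2 ≤ 2 - 2 * (Real.cos φ * Real.cos ψ + Real.sin φ * Real.sin ψ) := by
    linarith only [hε2sq, hdiff]
  have hε4 : ε ^ 2 ≤ 4 := by
    linarith only [hε2sq', hsum, sq_nonneg (Real.cos φ + Real.cos ψ),
      sq_nonneg (Real.sin φ + Real.sin ψ)]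
  have hε2 : ε ≤ 2 := by linarith only [hε4, sq_nonneg (ε - 2)]
  have hzb : x0 2 ^ 2 * ε ^ 2 ≤ 4 := by
    have h2z : (Real.cos φ + Real.cos ψ) * x0 0 + (Real.sin φ + Real.sin ψ) * x0 1
        = 2 * x0 2 := by linarith only [hP2, hQ2]
    have h2zsq : ((Real.cos φ + Real.cos ψ) * x0 0 + (Real.sin φ + Real.sin ψ) * x0 1) ^ 2
        = (2 * x0 2) ^ 2 := by rw [h2z]
    have hcs : (2 * x0 2) ^ 2 ≤ ((Real.cos φ + Real.cos ψ) ^ 2 + (Real.sin φ + Real.sin ψ) ^ 2)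
        * (x0 0 ^ 2 + x0 1 ^ 2) := by
      linarith only [h2zsq,
        sq_nonneg ((Real.cos φ + Real.cos ψ) * x0 1 - (Real.sin φ + Real.sin ψ) * x0 0)]
    have h5 : 4 * x0 2 ^ 2 ≤ (2 + 2 * (Real.cos φ * Real.cos ψ + Real.sin φ * Real.sin ψ))
        * (1 + x0 2 ^ 2) := by
      have heq : ((Real.cos φ + Real.cos ψ) ^ 2 + (Real.sin φ + Real.sin ψ) ^ 2)
          * (x0 0 ^ 2 + x0 1 ^ 2)
          = (2 + 2 * (Real.cos φ * Real.cos ψ + Real.sin φ * Real.sin ψ))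
            * (1 + x0 2 ^ 2) := by
        rw [hsum]
        linear_combination (2 + 2 * (Real.cos φ * Real.cos ψ + Real.sin φ * Real.sin ψ)) * hP3
      linarith only [hcs, heq]
    have t1 := mul_le_mul_of_nonneg_left hε2sq' (sq_nonneg (x0 2))
    linarith only [t1, h5, hcle]
  have hP4 : w 0 * Real.cos φ + w 1 * Real.sin φ - w 2 = 0 := by
    rw [hw0, hw1, hw2]
    linear_combination a * hP2 + b * hP1
  have ha' : a = w 0 * x0 0 + w 1 * x0 1 - w 2 * x0 2 := by
    rw [hw0, hw1, hw2]
    linear_combination (-a) * hP3 - b * hP2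
  have ha2 : a = w 0 * (x0 0 - x0 2 * Real.cos φ) + w 1 * (x0 1 - x0 2 * Real.sin φ) := by
    rw [ha']
    linear_combination (x0 2) * hP4
  have hv1 : (x0 0 - x0 2 * Real.cos φ) ^ 2 + (x0 1 - x0 2 * Real.sin φ) ^ 2 = 1 := by
    linear_combination hP3 + x0 2 ^ 2 * hP1 - 2 * x0 2 * hP2
  have haw : a ^ 2 ≤ eunorm w ^ 2 := by
    rw [eunorm_sq']
    have key : a ^ 2 = w 0 ^ 2 + w 1 ^ 2
        - (w 0 * (x0 1 - x0 2 * Real.sin φ) - w 1 * (x0 0 - x0 2 * Real.cos φ)) ^ 2 := by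
      rw [ha2]
      linear_combination (w 0 ^ 2 + w 1 ^ 2) * hv1
    linarith only [key,
      sq_nonneg (w 0 * (x0 1 - x0 2 * Real.sin φ) - w 1 * (x0 0 - x0 2 * Real.cos φ)),
      sq_nonneg (w 2)]
  have habs : |a| ≤ eunorm w := by
    rw [← Real.sqrt_sq_eq_abs]
    calc Real.sqrt (a ^ 2) ≤ Real.sqrt (eunorm w ^ 2) := Real.sqrt_le_sqrt haw
      _ = eunorm w := Real.sqrt_sq hW0
  have hN2 : eunorm x0 ^ 2 = 1 + 2 * x0 2 ^ 2 := by
    rw [eunorm_sq']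
    linarith only [hP3]
  have hN0 : 0 ≤ eunorm x0 := eunorm_nonneg' x0
  refine ⟨a • x0 + (lam * b) • xp, ?_, ?_⟩
  · show ρ 0 (a • x0 + (lam * b) • xp) < δ
    rw [rho_zero_left]
    have hud : a • x0 + (lam * b) • xp = lam • w + ((1 - lam) * a) • x0 := by
      rw [← hab]
      funext i
      simp only [Pi.add_apply, Pi.smul_apply, smul_eq_mul]
      ring
    have htri : eunorm (a • x0 + (lam * b) • xp)
        ≤ |lam| * eunorm w + |(1 - lam) * a| * eunorm x0 := by
      rw [hud]
      calc eunorm (lam • w + ((1 - lam) * a) • x0)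
          ≤ eunorm (lam • w) + eunorm (((1 - lam) * a) • x0) := eunorm_add_le' _ _
        _ = |lam| * eunorm w + |(1 - lam) * a| * eunorm x0 := by
            rw [eunorm_smul', eunorm_smul']
    have hlamab : |lam| = lam := abs_of_pos hlam0
    have h1ab : |(1 - lam) * a| = (1 - lam) * |a| := by
      rw [abs_mul, abs_of_pos (by linarith only [hlam1] : (0:ℝ) < 1 - lam)]
    rw [hlamab, h1ab] at htri
    have hW2 : eunorm w ^ 2 < (δ * ε / 4) ^ 2 := pow_lt_pow_left₀ hW hW0 (by norm_num)
    have haN2 : (|a| * eunorm x0) ^ 2 < δ ^ 2 := by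
      rw [mul_pow, sq_abs, hN2]
      have t2 := mul_le_mul_of_nonneg_right haw (sq_nonneg (x0 2))
      have t4 := mul_le_mul_of_nonneg_right hW2.le (sq_nonneg (x0 2))
      have t5 := mul_le_mul_of_nonneg_left hzb (sq_nonneg δ)
      have t7 := mul_le_mul_of_nonneg_left hε4 (sq_nonneg δ)
      have hδ2 : 0 < δ ^ 2 := pow_pos hδ 2
      linarith only [haw, hW2, t2, t4, t5, t7, hδ2]
    have haN : |a| * eunorm x0 < δ :=
      lt_of_pow_lt_pow_left₀ 2 hδ.le haN2
    have hWδ : eunorm w < δ := by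
      have h1 := mul_le_mul_of_nonneg_left hε2 hδ.le
      linarith only [h1, hW, hδ]
    have t8 := mul_lt_mul_of_pos_left hWδ hlam0
    have t9 := mul_le_mul_of_nonneg_left haN.le (by linarith only [hlam1] : (0:ℝ) ≤ 1 - lam)
    linarith only [htri, t8, t9]
  · rw [map_add, map_smul, map_smul, hgx0, hgxp, smul_smul]
    rw [show lam * b * lam⁻¹ = b by field_simp]
    exact hab
end
end

section
/- In a Schottky configuration, if g ∈ G is represented by a nonempty reduced word g = g_{i₀}^{j₀} ⋯ g_{i_l}^{j_l}, then g(Δ) ⊂ H_{i₀}^{j₀}; consequently g(Δ) ∩ Δ = ∅ for every g ∈ G with g ≠ 1, and g(closure(Δ)) ∩ closure(Δ) = ∅ whenever the reduced word representing g has length at least 2. -/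
noncomputable section

open Set

/-! A ping-pong argument on the future cone. A point of `Δ` has `mB · (v i j) < 0` for every
letter. A generator `g_i^j` sends `{mB · (v i (!j)) < 0}` into `{mB · (v i j) > 0}`: a future
timelike vector is a positive combination of two future null vectors on the same level set of
`mB · (v i (!j))`, and their directions lie in `S¹ − closure A_i^{-j} = P(g_i^{-j})(A_i^j)`.
Since the closed arcs are pairwise disjoint, the same decomposition shows that a future timelike
vector lies on the non-negative side of at most one `v i j`, which is what lets the induction
along a reduced word continue. For `closure Δ` the first step only gives `≥ 0`, which the
disjointness upgrades to a strict inequality for the next letter. -/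

open Filter Topology

lemma mB_comm (u v : V) : mB u v = mB v u := by
  simp only [mB]; ring

lemma mB_add_left (u v w : V) : mB (u + v) w = mB u w + mB v w := by
  simp only [mB, Pi.add_apply]; ring

lemma mB_add_right (u v w : V) : mB u (v + w) = mB u v + mB u w := by
  simp only [mB, Pi.add_apply]; ring

lemma mB_sub_left (u v w : V) : mB (u - v) w = mB u w - mB v w := by
  simp only [mB, Pi.sub_apply]; ring

lemma mB_smul_left (c : ℝ) (u v : V) : mB (c • u) v = c * mB u v := by
  simp only [mB, Pi.smul_apply, smul_eq_mul]; ring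

lemma mB_smul_right (c : ℝ) (u v : V) : mB u (c • v) = c * mB u v := by
  simp only [mB, Pi.smul_apply, smul_eq_mul]; ring

@[fun_prop]
lemma Continuous.mB {X : Type*} [TopologicalSpace X] {f g : X → V}
    (hf : Continuous f) (hg : Continuous g) : Continuous fun x => mB (f x) (g x) := by
  unfold _root_.mB; fun_prop

lemma eq_zero_of_mB_self_eq_zero {u : V} (hu : mB u u = 0) (h2 : u 2 = 0) : u = 0 := by
  simp only [mB, h2] at hu
  have h0 : u 0 = 0 := by nlinarith [sq_nonneg (u 0), sq_nonneg (u 1)]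
  have h1 : u 1 = 0 := by nlinarith [sq_nonneg (u 0), sq_nonneg (u 1)]
  ext i; fin_cases i <;> assumption

def FutureNull (n : V) : Prop := mB n n = 0 ∧ 0 < n 2

lemma isOpen_futureTimelike : IsOpen {v : V | FutureTimelike v} :=
  (isOpen_lt (f := fun v : V => mB v v) (by fun_prop) continuous_const).inter
    (isOpen_lt continuous_const (continuous_apply 2))

lemma closure_futureTimelike_subset : closure {v : V | FutureTimelike v} ⊆ {v | 0 ≤ v 2} :=
  closure_minimal (fun _ hv => hv.2.le) (isClosed_le continuous_const (continuous_apply 2))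

lemma FutureNull.mem_closure_futureTimelike {n : V} (hn : FutureNull n) :
    n ∈ closure {v : V | FutureTimelike v} := by
  have hlim : Tendsto (fun ε : ℝ => n + ε • Opt) (𝓝[>] 0) (𝓝 n) := by
    have : Continuous fun ε : ℝ => n + ε • Opt := by fun_prop
    simpa using (this.tendsto 0).mono_left nhdsWithin_le_nhds
  refine mem_closure_of_tendsto hlim (eventually_nhdsWithin_of_forall fun ε (hε : 0 < ε) => ?_)
  have hnO : mB n Opt = -n 2 := by simp [mB, Opt]
  have hOO : mB Opt Opt = -1 := by simp [mB, Opt]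
  refine ⟨?_, by simpa [Opt] using add_pos hn.2 hε⟩
  simp only [mB_add_left, mB_add_right, mB_smul_left, mB_smul_right, mB_comm Opt n, hnO, hOO,
    hn.1]
  nlinarith [hn.2]

lemma futureTimelike_of_mem_hyp {u : V} (hu : u ∈ Hyp) : FutureTimelike u :=
  ⟨by rw [hu.1]; norm_num, hu.2⟩

section Orthochronous

lemma FutureTimelike.symm_apply {g : V ≃ₗ[ℝ] V} (hB : ∀ u v, mB (g u) (g v) = mB u v)
    (hF : ∀ v, FutureTimelike v → FutureTimelike (g v)) {v : V} (hv : FutureTimelike v) :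
    FutureTimelike (g.symm v) := by
  have htl : mB (g.symm v) (g.symm v) < 0 := by
    rw [← hB, g.apply_symm_apply]; exact hv.1
  refine ⟨htl, lt_of_le_of_ne (not_lt.mp fun hneg => ?_) fun h0 => ?_⟩
  · have hmem : FutureTimelike (-g.symm v) := by
      refine ⟨?_, by simpa using hneg⟩
      simpa only [mB, Pi.neg_apply, neg_mul_neg] using htl
    have := (hF _ hmem).2
    simp only [map_neg, LinearEquiv.apply_symm_apply, Pi.neg_apply] at this
    linarith [hv.2]
  · simp only [mB, ← h0] at htl
    nlinarith [sq_nonneg (g.symm v 0), sq_nonneg (g.symm v 1)]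

def orthochronousGroup : Subgroup (V ≃ₗ[ℝ] V) where
  carrier :=
    {g | (∀ u v, mB (g u) (g v) = mB u v) ∧ ∀ v, FutureTimelike v → FutureTimelike (g v)}
  mul_mem' {g h} hg hh :=
    ⟨fun u v => (hg.1 _ _).trans (hh.1 u v), fun v hv => hg.2 _ (hh.2 v hv)⟩
  one_mem' := ⟨fun _ _ => rfl, fun _ hv => hv⟩
  inv_mem' {g} hg := ⟨fun u v => by
      simpa using (hg.1 (g.symm u) (g.symm v)).symm, fun _ hv => hv.symm_apply hg.1 hg.2⟩

lemma mem_orthochronousGroup_of_inSO {g : V ≃ₗ[ℝ] V} (hg : InSO g) : g ∈ orthochronousGroup :=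
  ⟨hg.1, hg.2.2⟩

variable {g : V ≃ₗ[ℝ] V} (hg : g ∈ orthochronousGroup)
include hg

lemma mB_apply_of_mem_orthochronous (u v : V) : mB (g u) (g v) = mB u v := hg.1 u v

lemma FutureTimelike.apply_of_mem_orthochronous {v : V} (hv : FutureTimelike v) :
    FutureTimelike (g v) := hg.2 v hv

lemma FutureNull.apply_of_mem_orthochronous {n : V} (hn : FutureNull n) :
    FutureNull (g n) := by
  have hnull : mB (g n) (g n) = 0 := by rw [mB_apply_of_mem_orthochronous hg]; exact hn.1
  have hcl : g n ∈ closure {v : V | FutureTimelike v} :=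
    map_mem_closure (LinearMap.continuous_of_finiteDimensional g.toLinearMap)
      hn.mem_closure_futureTimelike fun v hv => hv.apply_of_mem_orthochronous hg
  refine ⟨hnull, lt_of_le_of_ne (closure_futureTimelike_subset hcl) fun h0 => ?_⟩
  have : n = 0 := by simpa using eq_zero_of_mB_self_eq_zero hnull h0.symm
  simpa [this] using hn.2

lemma apply_mem_hyp_of_mem_orthochronous {u : V} (hu : u ∈ Hyp) : g u ∈ Hyp :=
  ⟨by rw [mB_apply_of_mem_orthochronous hg]; exact hu.1,
    ((futureTimelike_of_mem_hyp hu).apply_of_mem_orthochronous hg).2⟩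

end Orthochronous

lemma exists_roots_pos_neg {a b c : ℝ} (ha : 0 < a) (hc : c < 0) :
    ∃ τ₁ τ₂ : ℝ, 0 < τ₁ ∧ τ₂ < 0 ∧
      a * τ₁ ^ 2 + 2 * b * τ₁ + c = 0 ∧ a * τ₂ ^ 2 + 2 * b * τ₂ + c = 0 := by
  have hdisc : 0 ≤ b ^ 2 - a * c := by nlinarith [sq_nonneg b]
  set D := Real.sqrt (b ^ 2 - a * c)
  have hD : D ^ 2 = b ^ 2 - a * c := Real.sq_sqrt hdisc
  have hbD : |b| < D := by nlinarith [sq_abs b, Real.sqrt_nonneg (b ^ 2 - a * c)]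
  obtain ⟨h1, h2⟩ := abs_lt.mp hbD
  refine ⟨(-b + D) / a, (-b - D) / a, div_pos (by linarith) ha,
    div_neg_of_neg_of_pos (by linarith) ha, ?_, ?_⟩ <;>
  · field_simp
    linear_combination hD

/-- Moving along the spacelike direction `d ⊥ x` with `d 2 = 0` splits a future timelike vector
into two future null vectors on the same level set of `mB · x`. -/
lemma FutureTimelike.exists_futureNull_decomp {u x : V} (hu : FutureTimelike u)
    (hx : 0 < mB x x) :
    ∃ (n₁ n₂ : V) (α β : ℝ), FutureNull n₁ ∧ FutureNull n₂ ∧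
      mB n₁ x = mB u x ∧ mB n₂ x = mB u x ∧ 0 < α ∧ 0 < β ∧ u = α • n₁ + β • n₂ := by
  set d : V := ![-(x 1), x 0, 0]
  have hdx : mB d x = 0 := by simp only [d, mB, Matrix.cons_val]; ring
  have hdd : 0 < mB d d := by
    simp only [d, mB, Matrix.cons_val] at hx ⊢; nlinarith [sq_nonneg (x 2)]
  obtain ⟨τ₁, τ₂, hτ₁, hτ₂, hr₁, hr₂⟩ := exists_roots_pos_neg (b := mB u d) hdd hu.1
  have hnull : ∀ τ : ℝ, mB d d * τ ^ 2 + 2 * mB u d * τ + mB u u = 0 →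
      FutureNull (u + τ • d) := by
    intro τ hτ
    refine ⟨?_, by simpa [d] using hu.2⟩
    simp only [mB_add_left, mB_add_right, mB_smul_left, mB_smul_right, mB_comm d u]
    linear_combination hτ
  have hlevel : ∀ τ : ℝ, mB (u + τ • d) x = mB u x := fun τ => by
    rw [mB_add_left, mB_smul_left, hdx, mul_zero, add_zero]
  refine ⟨u + τ₁ • d, u + τ₂ • d, -τ₂ / (τ₁ - τ₂), τ₁ / (τ₁ - τ₂), hnull τ₁ hr₁, hnull τ₂ hr₂,
    hlevel τ₁, hlevel τ₂, div_pos (by linarith) (by linarith), div_pos hτ₁ (by linarith), ?_⟩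
  have : τ₁ - τ₂ ≠ 0 := by linarith
  ext i
  simp only [Pi.add_apply, Pi.smul_apply, smul_eq_mul]
  field_simp
  ring

lemma continuous_uph : Continuous uph := by
  refine continuous_pi fun i => ?_
  fin_cases i <;> simp only [uph] <;> fun_prop

lemma mB_uph (φ : ℝ) (x : V) : mB (uph φ) x = x 0 * Real.cos φ + x 1 * Real.sin φ - x 2 := by
  simp only [mB, uph, Matrix.cons_val]; ring

lemma futureNull_of_mem_circ {u : V} (hu : u ∈ circ) : FutureNull u := by
  obtain ⟨φ, rfl⟩ := hu
  refine ⟨?_, by simp [uph]⟩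
  simp only [mB, uph, Matrix.cons_val]
  linear_combination Real.cos_sq_add_sin_sq φ

lemma FutureNull.nproj_mem_circ {n : V} (hn : FutureNull n) : nproj n ∈ circ := by
  obtain ⟨hnull, hpos⟩ := hn
  set z : ℂ := ⟨n 0 / n 2, n 1 / n 2⟩
  have hz : ‖z‖ = 1 := by
    rw [Complex.norm_def, Real.sqrt_eq_one, Complex.normSq_mk]
    simp only [mB] at hnull
    field_simp
    linear_combination hnull
  have hz0 : z ≠ 0 := norm_ne_zero_iff.mp (by rw [hz]; exact one_ne_zero)
  refine ⟨Complex.arg z, ?_⟩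
  ext i
  fin_cases i <;> simp [nproj, uph, Complex.cos_arg hz0, Complex.sin_arg, hz, z] <;> field_simp

lemma closure_circ_pos_subset (x : V) :
    closure {z | z ∈ circ ∧ 0 < mB z x} ⊆ {z | 0 ≤ mB z x} :=
  closure_minimal (fun _ hz => hz.2.le) (isClosed_le continuous_const (by fun_prop))

/-- On the boundary of an arc the derivative of `φ ↦ mB (uph φ) x` squares to `mB x x ≠ 0`, so
the boundary point cannot be a local maximum. -/
lemma mem_closure_circ_pos {x u : V} (hx : 0 < mB x x) (hu : u ∈ circ) (h : 0 ≤ mB u x) :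
    u ∈ closure {z | z ∈ circ ∧ 0 < mB z x} := by
  obtain ⟨φ, rfl⟩ := hu
  rcases h.lt_or_eq with hpos | hzero
  · exact subset_closure ⟨⟨φ, rfl⟩, hpos⟩
  by_contra hcl
  rw [mem_closure_iff_frequently, not_frequently] at hcl
  set f : ℝ → ℝ := fun θ => x 0 * Real.cos θ + x 1 * Real.sin θ - x 2
  have hmax : IsLocalMax f φ := by
    filter_upwards [continuous_uph.continuousAt.eventually hcl] with θ hθ
    have := (not_lt.mp fun hθpos => hθ ⟨⟨θ, rfl⟩, hθpos⟩).trans hzero.le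
    simpa only [f, mB_uph] using this
  have hderiv : HasDerivAt f (x 0 * -Real.sin φ + x 1 * Real.cos φ) φ :=
    (((Real.hasDerivAt_cos φ).const_mul (x 0)).add
      ((Real.hasDerivAt_sin φ).const_mul (x 1))).sub_const (x 2)
  have hc := hmax.hasDerivAt_eq_zero hderiv
  have hlevel : x 0 * Real.cos φ + x 1 * Real.sin φ = x 2 := by
    linarith [mB_uph φ x]
  have : mB x x = 0 := by
    simp only [mB]
    linear_combination (-(x 0 ^ 2 + x 1 ^ 2)) * Real.sin_sq_add_cos_sq φ
      + (x 0 * Real.cos φ + x 1 * Real.sin φ + x 2) * hlevel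
      + (x 1 * Real.cos φ - x 0 * Real.sin φ) * hc
  linarith

lemma nproj_mem_closure_of_nonneg {x n : V} (hx : 0 < mB x x) (hn : FutureNull n)
    (h : 0 ≤ mB n x) : nproj n ∈ closure {z | z ∈ circ ∧ 0 < mB z x} :=
  mem_closure_circ_pos hx hn.nproj_mem_circ
    (by rw [nproj, mB_smul_left]; exact mul_nonneg (inv_pos.mpr hn.2).le h)

lemma FutureTimelike.mB_neg_of_disjoint {x y u : V} (hx : 0 < mB x x) (hy : 0 < mB y y)
    (hdisj : Disjoint (closure {z | z ∈ circ ∧ 0 < mB z x}) (closure {z | z ∈ circ ∧ 0 < mB z y}))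
    (hu : FutureTimelike u) (hux : 0 ≤ mB u x) : mB u y < 0 := by
  obtain ⟨n₁, n₂, α, β, hn₁, hn₂, hx₁, hx₂, hα, hβ, rfl⟩ := hu.exists_futureNull_decomp hx
  have hnull : ∀ n, FutureNull n → 0 ≤ mB n x → mB n y < 0 := fun n hn hnx =>
    not_le.mp fun hny => disjoint_left.mp hdisj (nproj_mem_closure_of_nonneg hx hn hnx)
      (nproj_mem_closure_of_nonneg hy hn hny)
  have h₁ := hnull n₁ hn₁ (hx₁ ▸ hux)
  have h₂ := hnull n₂ hn₂ (hx₂ ▸ hux)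
  rw [mB_add_left, mB_smul_left, mB_smul_left]
  nlinarith

/-- A future null `n` with `mB n xm < 0` projects into `circ \ closure A⁻ ⊆ P(g⁻¹)(A⁺)`, so
`g n` is a positive multiple of a point of `A⁺`; `u` is a positive combination of two such `n`. -/
lemma FutureTimelike.mB_apply_pos {g : V ≃ₗ[ℝ] V} (hg : g ∈ orthochronousGroup) {xm xp u : V}
    (hpair : circ \ closure {z | z ∈ circ ∧ 0 < mB z xm} ⊆
      (fun z => nproj (g⁻¹ z)) '' {z | z ∈ circ ∧ 0 < mB z xp})
    (hxm : 0 < mB xm xm) (hu : FutureTimelike u) (h : mB u xm < 0) : 0 < mB (g u) xp := by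
  obtain ⟨n₁, n₂, α, β, hn₁, hn₂, hx₁, hx₂, hα, hβ, rfl⟩ := hu.exists_futureNull_decomp hxm
  have hnull : ∀ n, FutureNull n → mB n xm < 0 → 0 < mB (g n) xp := by
    intro n hn hneg
    have hzneg : mB (nproj n) xm < 0 := by
      rw [nproj, mB_smul_left]; exact mul_neg_of_pos_of_neg (inv_pos.mpr hn.2) hneg
    have hz : nproj n ∉ closure {z | z ∈ circ ∧ 0 < mB z xm} := fun hcl =>
      (closure_circ_pos_subset xm hcl).not_gt hzneg
    obtain ⟨y, ⟨hy, hyxp⟩, hyz⟩ := hpair ⟨hn.nproj_mem_circ, hz⟩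
    set c := (g⁻¹ y) 2
    have hgz : g (nproj n) = c⁻¹ • y := by
      rw [← hyz]
      show g (c⁻¹ • g.symm y) = c⁻¹ • y
      rw [map_smul, g.apply_symm_apply]
    have hc : 0 < c⁻¹ := by
      have := ((futureNull_of_mem_circ hn.nproj_mem_circ).apply_of_mem_orthochronous hg).2
      have hy2 : y 2 = 1 := by obtain ⟨φ, rfl⟩ := hy; rfl
      rwa [hgz, Pi.smul_apply, hy2, smul_eq_mul, mul_one] at this
    have hn_eq : n = n 2 • nproj n := by
      rw [nproj, smul_smul, mul_inv_cancel₀ hn.2.ne', one_smul]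
    rw [hn_eq, map_smul, mB_smul_left, hgz, mB_smul_left]
    exact mul_pos hn.2 (mul_pos hc hyxp)
  have h₁ := hnull n₁ hn₁ (hx₁ ▸ h)
  have h₂ := hnull n₂ hn₂ (hx₂ ▸ h)
  rw [map_add, map_smul, map_smul, mB_add_left, mB_smul_left, mB_smul_left]
  positivity

lemma FutureTimelike.mB_apply_nonneg {g : V ≃ₗ[ℝ] V} (hg : g ∈ orthochronousGroup) {xm xp u : V}
    (hpair : circ \ closure {z | z ∈ circ ∧ 0 < mB z xm} ⊆
      (fun z => nproj (g⁻¹ z)) '' {z | z ∈ circ ∧ 0 < mB z xp})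
    (hxm : 0 < mB xm xm) (hu : FutureTimelike u) (h : mB u xm ≤ 0) : 0 ≤ mB (g u) xp := by
  have hcont : Continuous fun t : ℝ => u - t • xm := by fun_prop
  have hlim : Tendsto (fun t : ℝ => u - t • xm) (𝓝[>] 0) (𝓝 u) := by
    simpa using (hcont.tendsto 0).mono_left nhdsWithin_le_nhds
  have hpert : ∀ᶠ t in 𝓝[>] (0 : ℝ), FutureTimelike (u - t • xm) ∧ mB (u - t • xm) xm < 0 :=
    (hlim.eventually (isOpen_futureTimelike.mem_nhds hu)).and <|
      eventually_nhdsWithin_of_forall fun t (ht : 0 < t) => by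
        rw [mB_sub_left, mB_smul_left]; nlinarith
  have hgc : Continuous g := LinearMap.continuous_of_finiteDimensional g.toLinearMap
  have hcont' : Continuous fun t : ℝ => mB (g (u - t • xm)) xp := by fun_prop
  have hlim' : Tendsto (fun t : ℝ => mB (g (u - t • xm)) xp) (𝓝[>] 0) (𝓝 (mB (g u) xp)) := by
    simpa using (hcont'.tendsto 0).mono_left nhdsWithin_le_nhds
  exact ge_of_tendsto hlim' <| hpert.mono fun t ht => (ht.1.mB_apply_pos hg hpair hxm ht.2).le

lemma mem_closure_halfPlane {v u : V} (hv : UnitSpacelike v) (hu : u ∈ Hyp) (h : 0 ≤ mB u v) :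
    u ∈ closure (halfPlane v) := by
  rcases h.lt_or_eq with hpos | hzero
  · exact subset_closure ⟨hu, hpos⟩
  have hcont : Continuous fun t : ℝ => Real.cosh t • u + Real.sinh t • v := by fun_prop
  have hlim : Tendsto (fun t : ℝ => Real.cosh t • u + Real.sinh t • v) (𝓝[>] 0) (𝓝 u) := by
    simpa using (hcont.tendsto 0).mono_left nhdsWithin_le_nhds
  have hpos2 : ∀ᶠ t in 𝓝[>] (0 : ℝ), 0 < (Real.cosh t • u + Real.sinh t • v) 2 :=
    hlim.eventually (isOpen_lt continuous_const (continuous_apply 2) |>.mem_nhds hu.2)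
  refine mem_closure_of_tendsto hlim (hpos2.mp (eventually_nhdsWithin_of_forall fun t ht h2 => ?_))
  have huv : mB u v = 0 := hzero.symm
  have hvu : mB v u = 0 := by rw [mB_comm]; exact huv
  refine ⟨⟨?_, h2⟩, ?_⟩
  · simp only [mB_add_left, mB_add_right, mB_smul_left, mB_smul_right, hu.1, huv, hvu,
      show mB v v = 1 from hv]
    linear_combination -Real.cosh_sq_sub_sinh_sq t
  · simp only [mB_add_left, mB_smul_left, huv, show mB v v = 1 from hv]
    simpa using Real.sinh_pos_iff.mpr ht

lemma ReducedWord.ne {m l : ℕ} {w : ℕ → Fin m × Bool} (hw : ReducedWord l w) {k : ℕ}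
    (hk : k < l) : w (k + 1) ≠ ((w k).1, !(w k).2) := fun h =>
  hw k hk (Prod.ext_iff.mp h)

lemma ReducedWord.of_succ {m l : ℕ} {w : ℕ → Fin m × Bool} (hw : ReducedWord (l + 1) w) :
    ReducedWord l w := fun k hk => hw k (by omega)

lemma ReducedWord.tail {m l : ℕ} {w : ℕ → Fin m × Bool} (hw : ReducedWord (l + 1) w) :
    ReducedWord l fun t => w (t + 1) := fun k hk => hw (k + 1) (by omega)

namespace LinSchottky

variable {m : ℕ} (S : LinSchottky m)

lemma gp_mem_orthochronousGroup (i : Fin m) (j : Bool) : S.gp i j ∈ orthochronousGroup := by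
  have hg := mem_orthochronousGroup_of_inSO (S.hSO i)
  cases j
  · exact inv_mem hg
  · exact hg

lemma wprod_mem_orthochronousGroup (w : ℕ → Fin m × Bool) (k : ℕ) :
    S.wprod w k ∈ orthochronousGroup :=
  Subgroup.list_prod_mem _ <| List.forall_mem_map.mpr fun _ _ => S.gp_mem_orthochronousGroup _ _

lemma gp_not_mul_gp (i : Fin m) (j : Bool) : S.gp i (!j) * S.gp i j = 1 := by
  cases j <;> simp [gp, sgen]

lemma wprod_zero (w : ℕ → Fin m × Bool) : S.wprod w 0 = 1 := rfl

lemma wprod_succ (w : ℕ → Fin m × Bool) (k : ℕ) :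
    S.wprod w (k + 1) = S.gp (w 0).1 (w 0).2 * S.wprod (fun t => w (t + 1)) k := by
  simp [wprod, List.range_succ_eq_map, Function.comp_def]

lemma wprod_succ' (w : ℕ → Fin m × Bool) (k : ℕ) :
    S.wprod w (k + 1) = S.wprod w k * S.gp (w k).1 (w k).2 := by
  simp [wprod, List.range_succ]

section PingPong

variable {S} {v : Fin m → Bool → V}
  (hv : ∀ i j, UnitSpacelike (v i j) ∧ S.A i j = {u ∈ circ | 0 < mB u (v i j)})
include hv

lemma circ_diff_subset_image_gp (i : Fin m) (j : Bool) :
    circ \ closure {z | z ∈ circ ∧ 0 < mB z (v i !j)} ⊆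
      (fun z => nproj ((S.gp i j)⁻¹ z)) '' {z | z ∈ circ ∧ 0 < mB z (v i j)} := by
  have harc : ∀ j, arc (S.a i j) (S.b i j) = {z | z ∈ circ ∧ 0 < mB z (v i j)} :=
    fun j => (hv i j).2
  cases j
  · simpa [gp, sgen, harc] using (S.hPair i).ge
  · simpa [gp, sgen, harc] using (S.hPairInv i).ge

lemma mB_gp_apply_pos (i : Fin m) (j : Bool) {u : V} (hu : FutureTimelike u)
    (h : mB u (v i !j) < 0) : 0 < mB (S.gp i j u) (v i j) :=
  hu.mB_apply_pos (S.gp_mem_orthochronousGroup i j) (circ_diff_subset_image_gp hv i j)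
    (by rw [(hv i !j).1]; exact one_pos) h

lemma mB_gp_apply_nonneg (i : Fin m) (j : Bool) {u : V} (hu : FutureTimelike u)
    (h : mB u (v i !j) ≤ 0) : 0 ≤ mB (S.gp i j u) (v i j) :=
  hu.mB_apply_nonneg (S.gp_mem_orthochronousGroup i j) (circ_diff_subset_image_gp hv i j)
    (by rw [(hv i !j).1]; exact one_pos) h

lemma mB_neg_of_ne {p q : Fin m × Bool} (hpq : p ≠ q) {u : V} (hu : FutureTimelike u)
    (h : 0 ≤ mB u (v p.1 p.2)) : mB u (v q.1 q.2) < 0 := by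
  have hdisj := S.hDisjCl p.1 p.2 q.1 q.2 hpq
  rw [show arc _ _ = _ from (hv p.1 p.2).2, show arc _ _ = _ from (hv q.1 q.2).2] at hdisj
  exact hu.mB_neg_of_disjoint (by rw [(hv _ _).1]; exact one_pos)
    (by rw [(hv _ _).1]; exact one_pos) hdisj h

lemma mB_wprod_apply_pos (l : ℕ) {w : ℕ → Fin m × Bool} (hw : ReducedWord l w) {u : V}
    (hu : FutureTimelike u) (h : mB u (v (w l).1 !(w l).2) < 0) :
    0 < mB (S.wprod w (l + 1) u) (v (w 0).1 (w 0).2) := by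
  induction l generalizing w with
  | zero => exact mB_gp_apply_pos hv _ _ hu h
  | succ l ih =>
    rw [wprod_succ]
    set x := S.wprod (fun t => w (t + 1)) (l + 1) u
    have hx : FutureTimelike x := hu.apply_of_mem_orthochronous (S.wprod_mem_orthochronousGroup _ _)
    exact mB_gp_apply_pos hv _ _ hx
      (mB_neg_of_ne hv (hw.ne l.succ_pos) hx (ih hw.tail h).le)

lemma mB_wprod_apply_pos_of_nonpos (l : ℕ) {w : ℕ → Fin m × Bool} (hw : ReducedWord (l + 1) w)
    {u : V} (hu : FutureTimelike u) (h : mB u (v (w (l + 1)).1 !(w (l + 1)).2) ≤ 0) :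
    0 < mB (S.wprod w (l + 2) u) (v (w 0).1 (w 0).2) := by
  rw [wprod_succ']
  set x := S.gp (w (l + 1)).1 (w (l + 1)).2 u
  have hx : FutureTimelike x := hu.apply_of_mem_orthochronous (S.gp_mem_orthochronousGroup _ _)
  exact mB_wprod_apply_pos hv l hw.of_succ hx
    (mB_neg_of_ne hv (hw.ne l.lt_succ_self) hx (mB_gp_apply_nonneg hv _ _ hu h))

end PingPong

end LinSchottky

section Polygon

variable {m : ℕ} {v : Fin m → Bool → V}

lemma mB_neg_of_mem_linΔ (hv : ∀ i j, UnitSpacelike (v i j)) {u : V} (hu : u ∈ linΔ v)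
    (i : Fin m) (j : Bool) : mB u (v i j) < 0 :=
  not_le.mp fun h => hu.2 (mem_iUnion₂.mpr ⟨i, j, hu.1, mem_closure_halfPlane (hv i j) hu.1 h⟩)

lemma mB_nonpos_of_mem_closure_linΔ (hv : ∀ i j, UnitSpacelike (v i j)) {u : V}
    (hu : u ∈ closure (linΔ v)) (i : Fin m) (j : Bool) : mB u (v i j) ≤ 0 :=
  closure_minimal (fun _ hz => (mB_neg_of_mem_linΔ hv hz i j).le)
    (isClosed_le (f := fun z => mB z (v i j)) (by fun_prop) continuous_const) hu

end Polygon

namespace LinSchottky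

variable {m : ℕ} (S : LinSchottky m)

def HasReducedWord (γ : V ≃ₗ[ℝ] V) : Prop :=
  γ = 1 ∨ ∃ l w, ReducedWord l w ∧ γ = S.wprod w (l + 1)

lemma HasReducedWord.gp_mul {γ : V ≃ₗ[ℝ] V} (hγ : S.HasReducedWord γ) (i : Fin m) (j : Bool) :
    S.HasReducedWord (S.gp i j * γ) := by
  rcases hγ with rfl | ⟨l, w, hw, rfl⟩
  · exact Or.inr ⟨0, fun _ => (i, j), fun k hk => absurd hk k.not_lt_zero, by
      rw [mul_one, wprod_succ, wprod_zero, mul_one]⟩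
  by_cases hcancel : (i, j) = ((w 0).1, !(w 0).2)
  · obtain ⟨rfl, rfl⟩ := Prod.ext_iff.mp hcancel
    rw [wprod_succ, ← mul_assoc, gp_not_mul_gp, one_mul]
    cases l with
    | zero => exact Or.inl (S.wprod_zero _)
    | succ l => exact Or.inr ⟨l, _, hw.tail, rfl⟩
  · refine Or.inr ⟨l + 1, fun t => match t with | 0 => (i, j) | t + 1 => w t, ?_,
      (S.wprod_succ (fun t => match t with | 0 => (i, j) | t + 1 => w t) _).symm⟩
    rintro (_ | k) hk
    · exact fun h => hcancel (Prod.ext h.1.symm (by simp [h.2]))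
    · exact hw k (by omega)

lemma hasReducedWord_of_mem_G {γ : V ≃ₗ[ℝ] V} (hγ : γ ∈ S.G) : S.HasReducedWord γ := by
  induction hγ using Subgroup.closure_induction_left with
  | one => exact Or.inl rfl
  | mul_left x hx y _ ih =>
    obtain ⟨i, rfl⟩ := hx
    exact ih.gp_mul S i true
  | inv_mul_cancel x hx y _ ih =>
    obtain ⟨i, rfl⟩ := hx
    exact ih.gp_mul S i false

end LinSchottky

/-- if `g ∈ G` is a nonempty reduced word `g_{i₀}^{j₀} ⋯ g_{i_l}^{j_l}` then
`g(Δ) ⊆ H_{i₀}^{j₀}`; consequently `g(Δ) ∩ Δ = ∅` for every `g ∈ G`, `g ≠ 1`, and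
`g(closure Δ) ∩ closure Δ = ∅` whenever the reduced word has length at least 2. -/
theorem stmt8 {m : ℕ} (S : LinSchottky m) (v : Fin m → Bool → V)
    (hv : ∀ i j, UnitSpacelike (v i j) ∧ S.A i j = {u ∈ circ | 0 < mB u (v i j)}) :
    (∀ (l : ℕ) (w : ℕ → Fin m × Bool), ReducedWord l w →
      ⇑(S.wprod w (l + 1)) '' linΔ v ⊆ halfPlane (v (w 0).1 (w 0).2)) ∧
    (∀ γ : V ≃ₗ[ℝ] V, γ ∈ S.G → γ ≠ 1 → ⇑γ '' linΔ v ∩ linΔ v = ∅) ∧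
    (∀ (l : ℕ) (w : ℕ → Fin m × Bool), ReducedWord l w → 1 ≤ l →
      ⇑(S.wprod w (l + 1)) '' (Hyp ∩ closure (linΔ v)) ∩ (Hyp ∩ closure (linΔ v)) = ∅) := by
  have hunit : ∀ i j, UnitSpacelike (v i j) := fun i j => (hv i j).1
  have hmaps : ∀ l w, ReducedWord l w → MapsTo (S.wprod w (l + 1)) (linΔ v)
      (halfPlane (v (w 0).1 (w 0).2)) := fun l w hw u hu =>
    ⟨apply_mem_hyp_of_mem_orthochronous (S.wprod_mem_orthochronousGroup w _) hu.1,
      S.mB_wprod_apply_pos hv l hw (futureTimelike_of_mem_hyp hu.1)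
        (mB_neg_of_mem_linΔ hunit hu _ _)⟩
  refine ⟨fun l w hw => (hmaps l w hw).image_subset, fun γ hγ hγ1 => ?_, fun l w hw hl => ?_⟩
  · rcases S.hasReducedWord_of_mem_G hγ with rfl | ⟨l, w, hw, rfl⟩
    · exact absurd rfl hγ1
    refine eq_empty_iff_forall_notMem.mpr ?_
    rintro _ ⟨⟨u, hu, rfl⟩, hΔ⟩
    exact (hmaps l w hw hu).2.not_gt (mB_neg_of_mem_linΔ hunit hΔ _ _)
  · obtain ⟨l, rfl⟩ := Nat.exists_eq_add_of_le' hl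
    refine eq_empty_iff_forall_notMem.mpr ?_
    rintro _ ⟨⟨u, hu, rfl⟩, hΔ⟩
    exact (S.mB_wprod_apply_pos_of_nonpos hv l hw (futureTimelike_of_mem_hyp hu.1)
      (mB_nonpos_of_mem_closure_linΔ hunit hu.2 _ _)).not_ge
      (mB_nonpos_of_mem_closure_linΔ hunit hΔ.2 _ _)
end
end

section
/- In a Schottky configuration, the group G generated by g₁, …, g_m is a discrete subgroup of SO⁰(2,1): there exists a neighborhood of the identity in SO⁰(2,1) whose intersection with G is {1}; equivalently, no sequence of pairwise distinct elements of G converges to the identity. -/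
noncomputable section

open Set

/-!
Ping-pong on the circle: a nontrivial element of `G` is a nonempty reduced word
`g_{t₁} ⋯ g_{t_k}` in the generators. As there are at least four intervals, some `A_s`
differs from `A_{t₁}` and from `A_{t_k⁻¹}`, and the word sends the midpoint of `A_s` into
`A_{t₁}`. Elements close to the identity move each of the finitely many midpoints only
slightly, so they keep the midpoint of `A_s` away from the closures of the other intervals.
-/

def mBIsometryGroup : Subgroup (V ≃ₗ[ℝ] V) where
  carrier := {γ | ∀ u v, mB (γ u) (γ v) = mB u v}
  mul_mem' hγ hη u v := (hγ _ _).trans (hη u v)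
  one_mem' _ _ := rfl
  inv_mem' {γ} hγ u v := by simpa using (hγ (γ⁻¹ u) (γ⁻¹ v)).symm

lemma two_eq_one_of_mem_circ {u : V} (hu : u ∈ circ) : u 2 = 1 := by
  obtain ⟨φ, rfl⟩ := hu
  rfl

lemma mB_self_of_mem_circ {u : V} (hu : u ∈ circ) : mB u u = 0 := by
  obtain ⟨φ, rfl⟩ := hu
  simp only [mB, uph, Matrix.cons_val_zero, Matrix.cons_val_one, Matrix.cons_val, mul_one]
  nlinarith [Real.sin_sq_add_cos_sq φ]

lemma nproj_of_mem_circ {u : V} (hu : u ∈ circ) : nproj u = u := by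
  simp [nproj, two_eq_one_of_mem_circ hu]

lemma nproj_smul {c : ℝ} (hc : c ≠ 0) (v : V) : nproj (c • v) = nproj v := by
  simp only [nproj, Pi.smul_apply, smul_eq_mul, smul_smul, mul_inv]
  rw [mul_right_comm, inv_mul_cancel₀ hc, one_mul]

lemma isOpen_setOf_nproj_mem {O : Set V} (hO : IsOpen O) :
    IsOpen {w : V | w 2 ≠ 0 ∧ nproj w ∈ O} := by
  have hcont : ContinuousOn nproj {w : V | w 2 ≠ 0} :=
    ((continuous_apply 2).continuousOn.inv₀ fun _ hw => hw).smul continuousOn_id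
  exact hcont.isOpen_inter_preimage (isOpen_ne_fun (continuous_apply 2) continuous_const) hO

section Isometry

variable {γ η : V ≃ₗ[ℝ] V} {u : V}

/-- `γ u` is a nonzero null vector, and a null vector with vanishing third coordinate is zero. -/
lemma apply_two_ne_zero_of_mem_circ (hγ : γ ∈ mBIsometryGroup) (hu : u ∈ circ) :
    γ u 2 ≠ 0 := by
  intro h2
  have hnull : mB (γ u) (γ u) = 0 := (hγ u u).trans (mB_self_of_mem_circ hu)
  have h0 : γ u 0 = 0 := by simp only [mB, h2] at hnull; nlinarith
  have h1 : γ u 1 = 0 := by simp only [mB, h2] at hnull; nlinarith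
  have hγu : γ u = 0 := by
    ext i
    fin_cases i <;> assumption
  have hu2 := two_eq_one_of_mem_circ hu
  rw [(map_eq_zero_iff γ γ.injective).1 hγu] at hu2
  exact zero_ne_one hu2

lemma nproj_apply_nproj (γ : V ≃ₗ[ℝ] V) (hη : η ∈ mBIsometryGroup) (hu : u ∈ circ) :
    nproj (γ (nproj (η u))) = nproj ((γ * η) u) := by
  have hsmul : γ (nproj (η u)) = (η u 2)⁻¹ • (γ * η) u := map_smul _ _ _
  rw [hsmul, nproj_smul (inv_ne_zero (apply_two_ne_zero_of_mem_circ hη hu))]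

lemma nproj_inv_apply_nproj (hγ : γ ∈ mBIsometryGroup) (hu : u ∈ circ) :
    nproj (γ⁻¹ (nproj (γ u))) = u := by
  rw [nproj_apply_nproj _ hγ hu, inv_mul_cancel, LinearEquiv.coe_one, id, nproj_of_mem_circ hu]

end Isometry

lemma arc_subset_circ (a b : ℝ) : arc a b ⊆ circ := by
  rintro u ⟨φ, -, -, rfl⟩
  exact ⟨φ, rfl⟩

namespace LinSchottky

variable {m : ℕ} (S : LinSchottky m)

def arcMid (t : Fin m × Bool) : V := uph ((S.a t.1 t.2 + S.b t.1 t.2) / 2)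

lemma arcMid_mem_A (t : Fin m × Bool) : S.arcMid t ∈ S.A t.1 t.2 :=
  ⟨_, by linarith [(S.hab t.1 t.2).1], by linarith [(S.hab t.1 t.2).1], rfl⟩

lemma notMem_closure_A_of_mem_A {s t : Fin m × Bool} (hst : s ≠ t) {u : V}
    (hu : u ∈ S.A s.1 s.2) : u ∉ closure (S.A t.1 t.2) :=
  Set.disjoint_left.1 (S.hDisjCl s.1 s.2 t.1 t.2 (by simpa using hst)) (subset_closure hu)

lemma G_le_mBIsometryGroup : S.G ≤ mBIsometryGroup :=
  (Subgroup.closure_le _).2 <| Set.range_subset_iff.2 fun i => (S.hSO i).1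

lemma gp_mem_G (i : Fin m) (j : Bool) : S.gp i j ∈ S.G := by
  have hg : S.g i ∈ S.G := Subgroup.subset_closure (Set.mem_range_self i)
  cases j
  · exact S.G.inv_mem hg
  · exact hg

lemma mapsTo_gp (i : Fin m) (j : Bool) :
    Set.MapsTo (fun u => nproj (S.gp i j u)) (circ \ closure (S.A i !j)) (S.A i j) := by
  have hg : S.g i ∈ mBIsometryGroup := (S.hSO i).1
  cases j
  · rintro _ hv
    change _ ∈ circ \ closure (arc (S.a i true) (S.b i true)) at hv
    rw [← S.hPair i] at hv
    obtain ⟨u, hu, rfl⟩ := hv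
    change nproj ((S.g i)⁻¹ (nproj (S.g i u))) ∈ _
    rwa [nproj_inv_apply_nproj hg (arc_subset_circ _ _ hu)]
  · rintro _ hv
    change _ ∈ circ \ closure (arc (S.a i false) (S.b i false)) at hv
    rw [← S.hPairInv i] at hv
    obtain ⟨u, hu, rfl⟩ := hv
    have h := nproj_inv_apply_nproj (mBIsometryGroup.inv_mem hg) (arc_subset_circ _ _ hu)
    rw [inv_inv] at h
    change nproj (S.g i (nproj ((S.g i)⁻¹ u))) ∈ _
    rwa [h]

def wordProd (L : List (Fin m × Bool)) : V ≃ₗ[ℝ] V := (L.map fun t => S.gp t.1 t.2).prod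

lemma wordProd_mem_G (L : List (Fin m × Bool)) : S.wordProd L ∈ S.G :=
  S.G.list_prod_mem <| List.forall_mem_map.2 fun t _ => S.gp_mem_G t.1 t.2

lemma wordProd_toWord (w : FreeGroup (Fin m)) :
    S.wordProd w.toWord = FreeGroup.lift S.g w := by
  conv_rhs => rw [← FreeGroup.mk_toWord (x := w), FreeGroup.lift_mk]
  refine congrArg List.prod (List.map_congr_left fun t _ => ?_)
  cases t.2 <;> rfl

theorem nproj_wordProd_mem_A (L : List (Fin m × Bool)) (t : Fin m × Bool)
    (hL : FreeGroup.IsReduced (t :: L)) {u : V}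
    (hu : u ∈ circ \ closure (S.A ((t :: L).getLast (List.cons_ne_nil _ _)).1
      !((t :: L).getLast (List.cons_ne_nil _ _)).2)) :
    nproj (S.wordProd (t :: L) u) ∈ S.A t.1 t.2 := by
  induction L generalizing t with
  | nil => simpa [wordProd] using S.mapsTo_gp t.1 t.2 hu
  | cons t' L ih =>
    obtain ⟨hsign, hL'⟩ := FreeGroup.isReduced_cons_cons.1 hL
    have hv := ih t' hL' (by simpa [List.getLast_cons_cons] using hu)
    have hne : t' ≠ (t.1, !t.2) := by
      rintro rfl
      simp at hsign
    rw [wordProd, List.map_cons, List.prod_cons, ← wordProd,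
      ← nproj_apply_nproj _ (S.G_le_mBIsometryGroup (S.wordProd_mem_G _)) hu.1]
    exact S.mapsTo_gp t.1 t.2 ⟨arc_subset_circ _ _ hv, S.notMem_closure_A_of_mem_A hne hv⟩

theorem exists_nproj_apply_arcMid_mem_A {γ : V ≃ₗ[ℝ] V} (hγ : γ ∈ S.G) (hne : γ ≠ 1) :
    ∃ s t : Fin m × Bool, s ≠ t ∧ nproj (γ (S.arcMid s)) ∈ S.A t.1 t.2 := by
  rw [G, ← FreeGroup.range_lift_eq_closure] at hγ
  obtain ⟨w, rfl⟩ := hγ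
  have hw : w.toWord ≠ [] := fun h => hne (by rw [FreeGroup.toWord_eq_nil_iff.1 h, map_one])
  obtain ⟨t, L, hw⟩ := List.exists_cons_of_ne_nil hw
  set last := (t :: L).getLast (List.cons_ne_nil _ _)
  have hcard : ({t, (last.1, !last.2)} : Finset (Fin m × Bool)).card <
      (Finset.univ : Finset (Fin m × Bool)).card := by
    simp only [Finset.card_univ, Fintype.card_prod, Fintype.card_fin, Fintype.card_bool]
    linarith [Finset.card_le_two (a := t) (b := (last.1, !last.2)), S.hm]
  obtain ⟨s, -, hs⟩ := Finset.exists_mem_notMem_of_card_lt_card hcard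
  simp only [Finset.mem_insert, Finset.mem_singleton, not_or] at hs
  refine ⟨s, t, hs.1, ?_⟩
  have hred : FreeGroup.IsReduced (t :: L) := hw ▸ FreeGroup.isReduced_toWord
  rw [← S.wordProd_toWord, hw]
  exact S.nproj_wordProd_mem_A L t hred
    ⟨arc_subset_circ _ _ (S.arcMid_mem_A s), S.notMem_closure_A_of_mem_A hs.2 (S.arcMid_mem_A s)⟩

end LinSchottky

/-- the Schottky group `G` is a discrete subgroup of SO⁰(2,1): there is a
neighborhood of the identity meeting `G` only in `{1}` (identifying linear maps with
their matrices). -/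
theorem stmt9 {m : ℕ} (S : LinSchottky m) :
    ∃ U : Set (Matrix (Fin 3) (Fin 3) ℝ), IsOpen U ∧ (1 : Matrix (Fin 3) (Fin 3) ℝ) ∈ U ∧
      ∀ γ : V ≃ₗ[ℝ] V, γ ∈ S.G → LinearMap.toMatrix' γ.toLinearMap ∈ U → γ = 1 := by
  let O : Fin m × Bool → Set V := fun s => (⋃ t ∈ ({s}ᶜ : Finset _), closure (S.A t.1 t.2))ᶜ
  refine ⟨⋂ s, (Matrix.mulVec · (S.arcMid s)) ⁻¹' {w | w 2 ≠ 0 ∧ nproj w ∈ O s}, ?_, ?_, ?_⟩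
  · exact isOpen_iInter_of_finite fun s =>
      (isOpen_setOf_nproj_mem (isClosed_biUnion_finset fun _ _ => isClosed_closure).isOpen_compl
        ).preimage (continuous_id.matrix_mulVec continuous_const)
  · refine Set.mem_iInter.2 fun s => ?_
    have hs := S.arcMid_mem_A s
    have hs_circ := arc_subset_circ _ _ hs
    refine ⟨?_, ?_⟩ <;> simp only [Matrix.one_mulVec, two_eq_one_of_mem_circ hs_circ,
      nproj_of_mem_circ hs_circ]
    · exact one_ne_zero
    · simp only [O, Set.mem_compl_iff, Set.mem_iUnion, Finset.mem_compl, Finset.mem_singleton,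
        not_exists]
      exact fun t hts => S.notMem_closure_A_of_mem_A (Ne.symm hts) hs
  · intro γ hγ hU
    by_contra hne
    obtain ⟨s, t, hst, hmem⟩ := S.exists_nproj_apply_arcMid_mem_A hγ hne
    have hO := (Set.mem_iInter.1 hU s).2
    simp only [LinearMap.toMatrix'_mulVec, O, Set.mem_compl_iff, Set.mem_iUnion] at hO
    exact hO ⟨t, by simpa using hst.symm, subset_closure hmem⟩
end
end

section
/- For every unit-spacelike vector v ∈ ℝ^{2,1}, the hyperbolicity ρ(x⁺(v), x⁻(v)) satisfies ρ(x⁺(v), x⁻(v)) = 2 sech(d(O, l_v)) = 2 √(2/(1 + ‖v‖²)), where d(O, l_v) denotes the infimum of the hyperbolic distances from O to points of the geodesic l_v and ‖v‖ is the Euclidean norm of v. -/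
noncomputable section

open Set

section Stmt13Aux

lemma mB_uph_v (φ : ℝ) (w : V) : mB (uph φ) w = Real.cos φ * w 0 + Real.sin φ * w 1 - w 2 := by
  simp [mB, uph]

lemma rho_chord (v xm xp : V) (hv : UnitSpacelike v) (hfr : IsNullFrame v xm xp) :
    ρ xp xm = 2 / Real.sqrt (1 + v 2 ^ 2) := by
  obtain ⟨⟨φ₁, hφ₁⟩, ⟨φ₂, hφ₂⟩, hm1, hm2, hne, _⟩ := hfr
  have hv' : v 0 ^ 2 + v 1 ^ 2 = 1 + v 2 ^ 2 := by
    have h := hv; unfold UnitSpacelike mB at h; ring_nf; ring_nf at h; linarith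
  set a := v 0 with ha; set b := v 1 with hb; set c := v 2 with hc
  set x₁ := Real.cos φ₁ with hx1; set y₁ := Real.sin φ₁ with hy1
  set x₂ := Real.cos φ₂ with hx2; set y₂ := Real.sin φ₂ with hy2
  have h1 : x₁ * a + y₁ * b = c := by
    have h := hm1; rw [hφ₁, mB_uph_v] at h; rw [hx1, hy1]; linarith
  have h2 : x₂ * a + y₂ * b = c := by
    have h := hm2; rw [hφ₂, mB_uph_v] at h; rw [hx2, hy2]; linarith
  have u1 : x₁ ^ 2 + y₁ ^ 2 = 1 := by rw [hx1, hy1]; exact Real.cos_sq_add_sin_sq φ₁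
  have u2 : x₂ ^ 2 + y₂ ^ 2 = 1 := by rw [hx2, hy2]; exact Real.cos_sq_add_sin_sq φ₂
  set dx := x₂ - x₁ with hdx; set dy := y₂ - y₁ with hdy
  set sx := x₁ + x₂ with hsx; set sy := y₁ + y₂ with hsy
  have hpos : (0:ℝ) < 1 + c ^ 2 := by positivity
  have hdne : dx ≠ 0 ∨ dy ≠ 0 := by
    by_contra h
    push_neg at h
    apply hne
    rw [hφ₁, hφ₂]
    have e1 : x₁ = x₂ := by have := h.1; rw [hdx] at this; linarith
    have e2 : y₁ = y₂ := by have := h.2; rw [hdy] at this; linarith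
    unfold uph; rw [← hx1, ← hy1, ← hx2, ← hy2, e1, e2]
  have ho1 : a * dx + b * dy = 0 := by rw [hdx, hdy]; linear_combination h2 - h1
  have ho2 : sx * dx + sy * dy = 0 := by
    rw [hdx, hdy, hsx, hsy]; linear_combination u2 - u1
  have hD : a * sy - b * sx = 0 := by
    rcases hdne with h | h
    · have : (a * sy - b * sx) * dx = 0 := by linear_combination sy * ho1 - b * ho2
      exact (mul_eq_zero.mp this).resolve_right h
    · have : (a * sy - b * sx) * dy = 0 := by linear_combination a * ho2 - sx * ho1
      exact (mul_eq_zero.mp this).resolve_right h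
  have h12 : a * sx + b * sy = 2 * c := by rw [hsx, hsy]; linear_combination h1 + h2
  have hsxv : sx * (1 + c ^ 2) = 2 * c * a := by
    linear_combination (-sx) * hv' + a * h12 - b * hD
  have hsyv : sy * (1 + c ^ 2) = 2 * c * b := by
    linear_combination (-sy) * hv' + b * h12 + a * hD
  have hss2 : (sx ^ 2 + sy ^ 2) * (1 + c ^ 2) ^ 2 = 4 * c ^ 2 * (1 + c ^ 2) := by
    linear_combination (sx * (1 + c ^ 2) + 2 * c * a) * hsxv
      + (sy * (1 + c ^ 2) + 2 * c * b) * hsyv + 4 * c ^ 2 * hv'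
  have hss : (sx ^ 2 + sy ^ 2) * (1 + c ^ 2) = 4 * c ^ 2 := by
    apply mul_right_cancel₀ hpos.ne'
    linear_combination hss2
  have hdd' : (dx ^ 2 + dy ^ 2) * (1 + c ^ 2) = 4 := by
    linear_combination 2 * (1 + c ^ 2) * u1 + 2 * (1 + c ^ 2) * u2 - hss
  have hdd : dx ^ 2 + dy ^ 2 = 4 / (1 + c ^ 2) := by
    field_simp
    linarith
  have hcoord : ρ xp xm = Real.sqrt (dx ^ 2 + dy ^ 2) := by
    unfold ρ eunorm
    rw [hφ₁, hφ₂]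
    congr 1
    simp [uph, Pi.sub_apply, ← hx1, ← hy1, ← hx2, ← hy2, hdx, hdy]
  rw [hcoord, hdd]
  rw [show (4:ℝ) / (1 + c ^ 2) = (2 / Real.sqrt (1 + c ^ 2)) ^ 2 by
    rw [div_pow, Real.sq_sqrt hpos.le]; norm_num]
  exact Real.sqrt_sq (by positivity)


lemma cosh_log_aux (R : ℝ) (h1 : 1 ≤ R) :
    Real.cosh (Real.log (R + Real.sqrt (R ^ 2 - 1))) = R := by
  have hnn : (0:ℝ) ≤ R ^ 2 - 1 := by nlinarith
  have hs2 : Real.sqrt (R ^ 2 - 1) ^ 2 = R ^ 2 - 1 := Real.sq_sqrt hnn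
  have hsnn : 0 ≤ Real.sqrt (R ^ 2 - 1) := Real.sqrt_nonneg _
  have hpos : 0 < R + Real.sqrt (R ^ 2 - 1) := by nlinarith
  rw [Real.cosh_eq, Real.exp_log hpos, Real.exp_neg, Real.exp_log hpos]
  have hinv : (R + Real.sqrt (R ^ 2 - 1))⁻¹ = R - Real.sqrt (R ^ 2 - 1) :=
    inv_eq_of_mul_eq_one_right (by nlinarith)
  rw [hinv]; ring

lemma hdist_Opt (u : V) (h2 : 0 < u 2) :
    hdist Opt u = Real.log (u 2 + Real.sqrt (u 2 ^ 2 - 1)) := by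
  unfold hdist mB Opt
  simp only [Matrix.cons_val_zero, Matrix.cons_val_one, Matrix.head_cons,
    Matrix.cons_val_two, Matrix.tail_cons]
  rw [show (0 : ℝ) * u 0 + 0 * u 1 - 1 * u 2 = -(u 2) by ring]
  rw [abs_neg, abs_of_pos h2, neg_sq]

lemma witness_mem (v : V) (hv' : v 0 ^ 2 + v 1 ^ 2 = 1 + v 2 ^ 2) :
    ![v 2 * v 0 / Real.sqrt (1 + v 2 ^ 2), v 2 * v 1 / Real.sqrt (1 + v 2 ^ 2),
      Real.sqrt (1 + v 2 ^ 2)] ∈ geo v := by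
  have hpos : (0:ℝ) < 1 + v 2 ^ 2 := by positivity
  have hR2 : Real.sqrt (1 + v 2 ^ 2) ^ 2 = 1 + v 2 ^ 2 := Real.sq_sqrt hpos.le
  have hRpos : 0 < Real.sqrt (1 + v 2 ^ 2) := Real.sqrt_pos.mpr hpos
  refine ⟨⟨?_, ?_⟩, ?_⟩
  · show mB _ _ = -1
    unfold mB
    simp only [Matrix.cons_val_zero, Matrix.cons_val_one, Matrix.head_cons,
      Matrix.cons_val_two, Matrix.tail_cons]
    field_simp
    nlinarith [hR2, hv']
  · show (0:ℝ) < Real.sqrt (1 + v 2 ^ 2)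
    exact hRpos
  · show mB _ v = 0
    unfold mB
    simp only [Matrix.cons_val_zero, Matrix.cons_val_one, Matrix.head_cons,
      Matrix.cons_val_two, Matrix.tail_cons]
    field_simp
    linear_combination v 2 * hv' - v 2 * hR2

lemma geo_height (v u : V) (hv' : v 0 ^ 2 + v 1 ^ 2 = 1 + v 2 ^ 2) (hu : u ∈ geo v) :
    Real.sqrt (1 + v 2 ^ 2) ≤ u 2 := by
  obtain ⟨⟨huu, hu2pos⟩, huv⟩ := hu
  have hpos : (0:ℝ) < 1 + v 2 ^ 2 := by positivity
  have hR2 : Real.sqrt (1 + v 2 ^ 2) ^ 2 = 1 + v 2 ^ 2 := Real.sq_sqrt hpos.le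
  have hRpos : 0 < Real.sqrt (1 + v 2 ^ 2) := Real.sqrt_pos.mpr hpos
  have huu' : u 0 ^ 2 + u 1 ^ 2 = u 2 ^ 2 - 1 := by
    unfold mB at huu; ring_nf; ring_nf at huu; linarith
  have huv' : u 0 * v 0 + u 1 * v 1 = u 2 * v 2 := by
    unfold mB at huv; linarith
  have hkey : u 2 ^ 2 - (1 + v 2 ^ 2) = (u 0 * v 1 - u 1 * v 0) ^ 2 := by
    linear_combination (-(v 0 ^ 2 + v 1 ^ 2)) * huu'
      + (u 0 * v 0 + u 1 * v 1 + u 2 * v 2) * huv' + (-(u 2 ^ 2 - 1)) * hv'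
  nlinarith [sq_nonneg (u 0 * v 1 - u 1 * v 0), hkey, hR2, hRpos, hu2pos]

lemma geo_sInf (v : V) (hv' : v 0 ^ 2 + v 1 ^ 2 = 1 + v 2 ^ 2) :
    sInf {r : ℝ | ∃ u ∈ geo v, r = hdist Opt u} =
      Real.log (Real.sqrt (1 + v 2 ^ 2) + Real.sqrt (Real.sqrt (1 + v 2 ^ 2) ^ 2 - 1)) := by
  have hpos : (0:ℝ) < 1 + v 2 ^ 2 := by positivity
  have hR2 : Real.sqrt (1 + v 2 ^ 2) ^ 2 = 1 + v 2 ^ 2 := Real.sq_sqrt hpos.le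
  have hRpos : 0 < Real.sqrt (1 + v 2 ^ 2) := Real.sqrt_pos.mpr hpos
  have hR1 : 1 ≤ Real.sqrt (1 + v 2 ^ 2) := by nlinarith
  have hmem : Real.log (Real.sqrt (1 + v 2 ^ 2) + Real.sqrt (Real.sqrt (1 + v 2 ^ 2) ^ 2 - 1))
      ∈ {r : ℝ | ∃ u ∈ geo v, r = hdist Opt u} := by
    refine ⟨_, witness_mem v hv', ?_⟩
    rw [hdist_Opt _ (show (0:ℝ) < _ from hRpos)]
    simp only [Matrix.cons_val_two, Matrix.tail_cons, Matrix.head_cons]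
  have hlb : ∀ t ∈ {r : ℝ | ∃ u ∈ geo v, r = hdist Opt u},
      Real.log (Real.sqrt (1 + v 2 ^ 2) + Real.sqrt (Real.sqrt (1 + v 2 ^ 2) ^ 2 - 1)) ≤ t := by
    rintro t ⟨u, hu, rfl⟩
    have hu2 := geo_height v u hv' hu
    have hu2pos : 0 < u 2 := hu.1.2
    rw [hdist_Opt u hu2pos]
    have hsle : Real.sqrt (Real.sqrt (1 + v 2 ^ 2) ^ 2 - 1) ≤ Real.sqrt (u 2 ^ 2 - 1) := by
      apply Real.sqrt_le_sqrt
      nlinarith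
    have hsq : (0:ℝ) ≤ Real.sqrt (Real.sqrt (1 + v 2 ^ 2) ^ 2 - 1) := Real.sqrt_nonneg _
    apply Real.log_le_log (by positivity)
    linarith
  exact le_antisymm (csInf_le ⟨_, fun t ht => hlb t ht⟩ hmem) (le_csInf ⟨_, hmem⟩ hlb)

end Stmt13Aux

theorem stmt13 (v xm xp : V) (hv : UnitSpacelike v) (hfr : IsNullFrame v xm xp) :
    ρ xp xm = 2 * (Real.cosh (sInf {r : ℝ | ∃ u ∈ geo v, r = hdist Opt u}))⁻¹ ∧
    ρ xp xm = 2 * Real.sqrt (2 / (1 + eunorm v ^ 2)) := by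
  have hρ := rho_chord v xm xp hv hfr
  have hv' : v 0 ^ 2 + v 1 ^ 2 = 1 + v 2 ^ 2 := by
    have h := hv; unfold UnitSpacelike mB at h; ring_nf; ring_nf at h; linarith
  have hpos : (0:ℝ) < 1 + v 2 ^ 2 := by positivity
  have hR2 : Real.sqrt (1 + v 2 ^ 2) ^ 2 = 1 + v 2 ^ 2 := Real.sq_sqrt hpos.le
  have hRpos : 0 < Real.sqrt (1 + v 2 ^ 2) := Real.sqrt_pos.mpr hpos
  have hR1 : 1 ≤ Real.sqrt (1 + v 2 ^ 2) := by nlinarith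
  constructor
  · rw [hρ, geo_sInf v hv', cosh_log_aux _ hR1, div_eq_mul_inv]
  · rw [hρ]
    have he : eunorm v ^ 2 = 1 + 2 * v 2 ^ 2 := by
      unfold eunorm
      rw [Real.sq_sqrt (by positivity)]
      linarith
    rw [he]
    rw [show (2:ℝ) / (1 + (1 + 2 * v 2 ^ 2)) = (1 + v 2 ^ 2)⁻¹ by
      rw [eq_comm, inv_eq_iff_eq_inv]; field_simp; ring]
    rw [Real.sqrt_inv, div_eq_mul_inv]
end
end

section
/- Conjugation distorts hyperbolicity boundedly. Let ψ ∈ SO⁰(2,1), let s = d(O, ψ(O)) be the hyperbolic distance that ψ moves the point O ∈ H², and set K = e^s π/2. Then for every ε > 0 and every hyperbolic g ∈ SO⁰(2,1): if ψ g ψ⁻¹ is ε-hyperbolic, then g is (ε/K)-hyperbolic. -/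
noncomputable section

open Set

/-! The fixed points of `g` on `S¹` are the pull-backs `x± = P(ψ⁻¹ y±)` of those of
`ψ g ψ⁻¹`. Writing `ψ⁻¹ y = c • x` with `x ∈ S¹`, the scale is `c = -B(y, ψ O)`, which lies in
`(0, e^s]` because `ψ O ∈ H²` is at distance `s` from `O`. On `S¹` the chordal distance
satisfies `ρ(u, v)² = -2 B(u, v)`, and `ψ` preserves `B`, so
`ρ(y⁺, y⁻)² = c⁺ c⁻ ρ(x⁺, x⁻)² ≤ e^{2s} ρ(x⁺, x⁻)²`; the factor `π/2 ≥ 1` is then harmless. -/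

open Real

lemma exists_cos_sin_eq_of_sq_add_sq_eq_one {a b : ℝ} (h : a ^ 2 + b ^ 2 = 1) :
    ∃ θ : ℝ, cos θ = a ∧ sin θ = b := by
  have hnorm : ‖(⟨a, b⟩ : ℂ)‖ = 1 := by
    rw [Complex.norm_def, Complex.normSq_mk, ← sq, ← sq, h, Real.sqrt_one]
  have hne : (⟨a, b⟩ : ℂ) ≠ 0 := by
    intro h0; simp [h0] at hnorm
  exact ⟨Complex.arg ⟨a, b⟩, by simp [Complex.cos_arg hne, hnorm],
    by simp [Complex.sin_arg, hnorm]⟩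

lemma ρ_nonneg (p q : V) : 0 ≤ ρ p q := sqrt_nonneg _

lemma mB_uph_self (φ : ℝ) : mB (uph φ) (uph φ) = 0 := by
  simp only [mB, uph, Matrix.cons_val_zero, Matrix.cons_val_one, Matrix.cons_val_two,
    Matrix.head_cons, Matrix.tail_cons]
  linear_combination sin_sq_add_cos_sq φ

lemma ρ_sq_of_mem_circ {u v : V} (hu : u ∈ circ) (hv : v ∈ circ) :
    ρ u v ^ 2 = -2 * mB u v := by
  obtain ⟨α, rfl⟩ := hu
  obtain ⟨β, rfl⟩ := hv
  rw [ρ, eunorm, sq_sqrt (by positivity)]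
  simp only [uph, mB, Pi.sub_apply, Matrix.cons_val_zero, Matrix.cons_val_one,
    Matrix.cons_val_two, Matrix.head_cons, Matrix.tail_cons]
  linear_combination sin_sq_add_cos_sq α + sin_sq_add_cos_sq β

lemma nproj_mem_circ {w : V} (hnull : mB w w = 0) (hw : 0 < w 2) : nproj w ∈ circ := by
  have hsq : (w 0 / w 2) ^ 2 + (w 1 / w 2) ^ 2 = 1 := by
    simp only [mB] at hnull
    field_simp
    linarith
  obtain ⟨θ, hcos, hsin⟩ := exists_cos_sin_eq_of_sq_add_sq_eq_one hsq
  refine ⟨θ, funext fun i => ?_⟩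
  fin_cases i <;> simp [nproj, uph, hcos, hsin, hw.ne', div_eq_inv_mul]

lemma mB_eq_mul_mB_nproj {a b : V} (ha : a 2 ≠ 0) (hb : b 2 ≠ 0) :
    mB a b = a 2 * b 2 * mB (nproj a) (nproj b) := by
  simp only [mB, nproj, Pi.smul_apply, smul_eq_mul]
  field_simp

lemma exp_hdist_Opt {p : V} (hp : p ∈ Hyp) :
    exp (hdist Opt p) = p 2 + √(p 2 ^ 2 - 1) := by
  have hOp : mB Opt p = -p 2 := by simp [mB, Opt]
  rw [hdist, hOp, abs_neg, abs_of_pos hp.2, neg_sq,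
    exp_log (by have := hp.2; positivity)]

lemma neg_mB_uph_mem_Ioc {p : V} (hp : p ∈ Hyp) (φ : ℝ) :
    -mB (uph φ) p ∈ Ioc 0 (exp (hdist Opt p)) := by
  set t := p 0 * cos φ + p 1 * sin φ
  have hmB : -mB (uph φ) p = p 2 - t := by
    simp [mB, uph, t]; ring
  have hrad : p 0 ^ 2 + p 1 ^ 2 = p 2 ^ 2 - 1 := by
    have := hp.1; simp only [mB] at this; linarith
  have ht : |t| ≤ √(p 2 ^ 2 - 1) := by
    refine abs_le_sqrt ?_
    nlinarith [sin_sq_add_cos_sq φ, sq_nonneg (p 0 * sin φ - p 1 * cos φ)]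
  have hr : √(p 2 ^ 2 - 1) < p 2 := (sqrt_lt' hp.2).2 (by linarith)
  rw [hmB, exp_hdist_Opt hp]
  constructor <;> linarith [abs_le.1 ht]

namespace InSO

variable {ψ : V ≃ₗ[ℝ] V}

lemma mB_symm (hψ : InSO ψ) (u v : V) : mB (ψ.symm u) (ψ.symm v) = mB u v := by
  conv_rhs => rw [← ψ.apply_symm_apply u, ← ψ.apply_symm_apply v]
  exact (hψ.1 _ _).symm

lemma apply_Opt_mem_Hyp (hψ : InSO ψ) : ψ Opt ∈ Hyp := by
  have hO : FutureTimelike Opt := by simp [FutureTimelike, mB, Opt]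
  refine ⟨?_, (hψ.2.2 Opt hO).2⟩
  rw [hψ.1]; simp [mB, Opt]

lemma symm_apply_two (hψ : InSO ψ) (y : V) : (ψ.symm y) 2 = -mB y (ψ Opt) := by
  have h := hψ.1 (ψ.symm y) Opt
  rw [ψ.apply_symm_apply] at h
  rw [h]; simp [mB, Opt]

lemma symm_apply_two_mem_Ioc (hψ : InSO ψ) {y : V} (hy : y ∈ circ) :
    (ψ.symm y) 2 ∈ Ioc 0 (exp (hdist Opt (ψ Opt))) := by
  obtain ⟨φ, rfl⟩ := hy
  rw [hψ.symm_apply_two]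
  exact neg_mB_uph_mem_Ioc hψ.apply_Opt_mem_Hyp φ

lemma nproj_symm_apply_mem_circ (hψ : InSO ψ) {y : V} (hy : y ∈ circ) :
    nproj (ψ.symm y) ∈ circ := by
  refine nproj_mem_circ ?_ (hψ.symm_apply_two_mem_Ioc hy).1
  obtain ⟨φ, rfl⟩ := hy
  rw [hψ.mB_symm, mB_uph_self]

lemma ρ_le_exp_hdist_mul (hψ : InSO ψ) {u v : V} (hu : u ∈ circ) (hv : v ∈ circ) :
    ρ u v ≤ exp (hdist Opt (ψ Opt)) * ρ (nproj (ψ.symm u)) (nproj (ψ.symm v)) := by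
  set a := ψ.symm u
  set b := ψ.symm v
  obtain ⟨ha0, haE⟩ := hψ.symm_apply_two_mem_Ioc hu
  obtain ⟨hb0, hbE⟩ := hψ.symm_apply_two_mem_Ioc hv
  have hsq : ρ u v ^ 2 = a 2 * b 2 * ρ (nproj a) (nproj b) ^ 2 := by
    rw [ρ_sq_of_mem_circ hu hv, ρ_sq_of_mem_circ (hψ.nproj_symm_apply_mem_circ hu)
      (hψ.nproj_symm_apply_mem_circ hv), ← hψ.mB_symm, mB_eq_mul_mB_nproj ha0.ne' hb0.ne']
    ring
  refine (pow_le_pow_iff_left₀ (ρ_nonneg _ _)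
    (mul_nonneg (exp_pos _).le (ρ_nonneg _ _)) two_ne_zero).1 ?_
  rw [hsq, mul_pow]
  gcongr
  rw [sq]
  exact mul_le_mul haE hbE hb0.le (exp_pos _).le

end InSO

lemma apply_nproj_symm_apply_of_conj {ψ g : V ≃ₗ[ℝ] V} {μ : ℝ} {y : V}
    (h : (ψ * g * ψ⁻¹) y = μ • y) : g (nproj (ψ.symm y)) = μ • nproj (ψ.symm y) := by
  have hg : g (ψ.symm y) = μ • ψ.symm y := by
    simpa using congrArg ψ.symm h
  rw [nproj, map_smul, hg, smul_comm]

lemma IsHypData.of_conj {ψ g : V ≃ₗ[ℝ] V} (hψ : InSO ψ) {lam : ℝ} {ym yp : V}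
    (h : IsHypData (ψ * g * ψ⁻¹) lam ym yp) :
    IsHypData g lam (nproj (ψ.symm ym)) (nproj (ψ.symm yp)) := by
  obtain ⟨hlam0, hlam1, hym, hyp, hgym, hgyp⟩ := h
  exact ⟨hlam0, hlam1, hψ.nproj_symm_apply_mem_circ hym, hψ.nproj_symm_apply_mem_circ hyp,
    apply_nproj_symm_apply_of_conj hgym, apply_nproj_symm_apply_of_conj hgyp⟩

theorem stmt14_general (ψ : V ≃ₗ[ℝ] V) (hψ : InSO ψ) (ε : ℝ)
    (g : V ≃ₗ[ℝ] V)
    (hconj : EpsHyperbolic (ψ * g * ψ⁻¹) ε) :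
    EpsHyperbolic g (ε / (Real.exp (hdist Opt (ψ Opt)) * Real.pi / 2)) := by
  obtain ⟨lam, ym, yp, hdata, hε⟩ := hconj
  refine ⟨lam, _, _, hdata.of_conj hψ, ?_⟩
  set E := exp (hdist Opt (ψ Opt))
  set r := ρ (nproj (ψ.symm yp)) (nproj (ψ.symm ym))
  have hr : 0 ≤ r := ρ_nonneg _ _
  rw [div_le_iff₀ (by positivity)]
  calc ε ≤ ρ yp ym := hε
    _ ≤ E * r := hψ.ρ_le_exp_hdist_mul hdata.2.2.2.1 hdata.2.2.1
    _ ≤ r * (E * π / 2) := by nlinarith [pi_gt_three, mul_nonneg (exp_pos (hdist Opt (ψ Opt))).le hr]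

/-- conjugation distorts hyperbolicity boundedly. Let `ψ ∈ SO⁰(2,1)`,
`s = d(O, ψ(O))` and `K = e^s π/2`. If `ψ g ψ⁻¹` is ε-hyperbolic, then `g` is
(ε/K)-hyperbolic. -/
theorem stmt14 (ψ : V ≃ₗ[ℝ] V) (hψ : InSO ψ) (ε : ℝ) (hε : 0 < ε)
    (g : V ≃ₗ[ℝ] V) (hg : IsHyperbolic g)
    (hconj : EpsHyperbolic (ψ * g * ψ⁻¹) ε) :
    EpsHyperbolic g (ε / (Real.exp (hdist Opt (ψ Opt)) * Real.pi / 2)) :=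
  stmt14_general ψ hψ ε g hconj
end
end

section
/- Disjoint crooked planes are uniformly separated: if C(u,p) and C(u',p') are crooked planes in Minkowski space E with C(u,p) ∩ C(u',p') = ∅, then the Euclidean distance between them is strictly positive, i.e. inf{ρ(x,y) : x ∈ C(u,p), y ∈ C(u',p')} > 0. -/
/-!
The crooked plane `C₀` is the union of four finitely generated convex cones (the two halves of
its stem and its two wings), so for crooked planes `S` and `T` the difference set `S - T` is a
translate of a finite union of finitely generated cones. By the conic Carathéodory theorem such a
cone is a finite union of cones spanned by linearly independent vectors, each of which is the
image of a closed orthant under an injective linear map; hence `S - T` is closed. Disjointness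
means `0 ∉ S - T`, so some ball around `0` misses `S - T`.
-/

noncomputable section

open Set

open Pointwise

section ConicHull

variable {ι κ E F : Type*} [AddCommGroup E] [Module ℝ E] [AddCommGroup F] [Module ℝ F]

def conicHull [Fintype ι] (v : ι → E) : Set E := Fintype.linearCombination ℝ v '' Ici 0

lemma mem_conicHull [Fintype ι] {v : ι → E} {x : E} :
    x ∈ conicHull v ↔ ∃ c : ι → ℝ, 0 ≤ c ∧ ∑ i, c i • v i = x := by
  simp [conicHull, Fintype.linearCombination_apply]

lemma mem_conicHull_three {a b c x : E} :
    x ∈ conicHull ![a, b, c] ↔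
      ∃ r s t : ℝ, 0 ≤ r ∧ 0 ≤ s ∧ 0 ≤ t ∧ r • a + s • b + t • c = x := by
  simp [mem_conicHull, Fin.sum_univ_three, Fin.exists_fin_succ_pi, Fin.exists_fin_zero_pi,
    Pi.le_def, Fin.forall_fin_succ, and_assoc, add_assoc]

lemma image_conicHull [Fintype ι] (f : E →ₗ[ℝ] F) (v : ι → E) :
    f '' conicHull v = conicHull (f ∘ v) := by
  simp only [conicHull, image_image]
  congr! 1 with c
  simp [Fintype.linearCombination_apply]

lemma conicHull_sub_conicHull [Fintype ι] [Fintype κ] (v : ι → E) (w : κ → E) :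
    conicHull v - conicHull w = conicHull (Sum.elim v (-w)) := by
  ext x
  simp only [mem_sub, mem_conicHull, Fintype.sum_sum_type, Sum.elim_inl, Sum.elim_inr]
  constructor
  · rintro ⟨_, ⟨c, hc, rfl⟩, _, ⟨d, hd, rfl⟩, rfl⟩
    refine ⟨Sum.elim c d, fun i => ?_, ?_⟩
    · cases i
      exacts [hc _, hd _]
    · simp [sub_eq_add_neg, Finset.sum_neg_distrib]
  · rintro ⟨c, hc, rfl⟩
    refine ⟨_, ⟨c ∘ Sum.inl, fun _ => hc _, rfl⟩, _, ⟨c ∘ Sum.inr, fun _ => hc _, rfl⟩,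
      ?_⟩
    simp [sub_eq_add_neg, Finset.sum_neg_distrib]

lemma conicHull_comp_subset [Fintype ι] [Fintype κ] (v : ι → E) (e : κ → ι) :
    conicHull (v ∘ e) ⊆ conicHull v := by
  classical
  rintro x ⟨c, hc, rfl⟩
  refine ⟨fun i => ∑ k : {k // e k = i}, c k, fun i => Finset.sum_nonneg fun k _ => hc k, ?_⟩
  simp only [Fintype.linearCombination_apply, Finset.sum_smul, Function.comp_apply]
  rw [← Fintype.sum_fiberwise e fun k => c k • v (e k)]
  refine Fintype.sum_congr _ _ fun i => Fintype.sum_congr _ _ fun k => ?_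
  rw [k.2]

lemma exists_coeff_eq_zero_of_not_linearIndepOn {v : ι → E} {s : Finset ι} {c : ι → ℝ}
    (hc : ∀ i ∈ s, 0 ≤ c i) (hv : ¬LinearIndepOn ℝ v s) :
    ∃ i ∈ s, ∃ c' : ι → ℝ, (∀ j ∈ s, 0 ≤ c' j) ∧ c' i = 0 ∧
      ∑ j ∈ s, c' j • v j = ∑ j ∈ s, c j • v j := by
  -- Subtract the largest multiple of a dependence `f` that keeps all coefficients nonnegative.
  obtain ⟨f, hf, hpos⟩ :
      ∃ f : ι → ℝ, ∑ j ∈ s, f j • v j = 0 ∧ ∃ i ∈ s, 0 < f i := by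
    obtain ⟨f, hf, i, hi, hfi⟩ := not_linearIndepOn_finset_iff.mp hv
    rcases hfi.lt_or_gt with hneg | hpos
    · exact ⟨-f, by simp [Finset.sum_neg_distrib, hf], i, hi, by simpa using hneg⟩
    · exact ⟨f, hf, i, hi, hpos⟩
  obtain ⟨i, hi, hmin⟩ := (s.filter (0 < f ·)).exists_min_image (fun j => c j / f j)
    (by simpa [Finset.filter_nonempty_iff] using hpos)
  rw [Finset.mem_filter] at hi
  set t := c i / f i
  have ht : 0 ≤ t := div_nonneg (hc i hi.1) hi.2.le
  refine ⟨i, hi.1, fun j => c j - t * f j, fun j hj => ?_,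
    by simp only [t, div_mul_cancel₀ _ hi.2.ne', sub_self], ?_⟩
  · rcases le_or_gt (f j) 0 with hfj | hfj
    · nlinarith [hc j hj]
    · have := hmin j (Finset.mem_filter.mpr ⟨hj, hfj⟩)
      rw [le_div_iff₀ hfj] at this
      linarith
  · simp [sub_smul, mul_smul, Finset.sum_sub_distrib, ← Finset.smul_sum, hf]

lemma exists_linearIndepOn_mem_conicHull (v : ι → E) (s : Finset ι) (c : ι → ℝ)
    (hc : ∀ i ∈ s, 0 ≤ c i) :
    ∃ t ⊆ s, LinearIndepOn ℝ v t ∧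
      ∑ i ∈ s, c i • v i ∈ conicHull (fun i : t => v i) := by
  classical
  induction s using Finset.strongInduction generalizing c with
  | H s ih =>
    by_cases hv : LinearIndepOn ℝ v s
    · refine ⟨s, subset_rfl, hv, mem_conicHull.mpr ⟨c ∘ (↑), fun i => hc _ i.2, ?_⟩⟩
      exact Finset.sum_coe_sort s fun i => c i • v i
    · obtain ⟨i, hi, c', hc', hc'i, hsum⟩ := exists_coeff_eq_zero_of_not_linearIndepOn hc hv
      obtain ⟨t, hts, ht, hmem⟩ := ih (s.erase i) (Finset.erase_ssubset hi) c'
        fun j hj => hc' j (Finset.mem_of_mem_erase hj)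
      refine ⟨t, hts.trans (s.erase_subset i), ht, ?_⟩
      rwa [← hsum, ← Finset.sum_erase s (a := i) (by simp [hc'i])]

lemma conicHull_eq_iUnion_linearIndepOn [Fintype ι] (v : ι → E) :
    conicHull v =
      ⋃ (t : Finset ι) (_ : LinearIndepOn ℝ v t), conicHull (fun i : t => v i) := by
  refine Subset.antisymm ?_ (iUnion₂_subset fun t _ => conicHull_comp_subset v Subtype.val)
  rintro _ ⟨c, hc, rfl⟩
  obtain ⟨t, -, ht, hmem⟩ := exists_linearIndepOn_mem_conicHull v Finset.univ c fun i _ => hc i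
  exact mem_iUnion₂.mpr ⟨t, ht, by simpa [Fintype.linearCombination_apply] using hmem⟩

variable [TopologicalSpace E] [IsTopologicalAddGroup E] [ContinuousSMul ℝ E] [T2Space E]

lemma LinearIndependent.isClosed_conicHull [Fintype ι] {v : ι → E}
    (hv : LinearIndependent ℝ v) : IsClosed (conicHull v) :=
  (LinearMap.isClosedEmbedding_of_injective (LinearMap.ker_eq_bot.mpr
    hv.fintypeLinearCombination_injective)).isClosedMap _ isClosed_Ici

lemma isClosed_conicHull [Fintype ι] (v : ι → E) : IsClosed (conicHull v) := by
  rw [conicHull_eq_iUnion_linearIndepOn]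
  exact isClosed_iUnion_of_finite fun t => isClosed_iUnion_of_finite fun ht =>
    LinearIndependent.isClosed_conicHull ht

lemma isClosed_iUnion_conicHull_sub_iUnion_conicHull {K L : Type*} [Finite K] [Finite L]
    [Fintype ι] [Fintype κ] (v : K → ι → E) (w : L → κ → E) :
    IsClosed ((⋃ k, conicHull (v k)) - ⋃ l, conicHull (w l)) := by
  simp_rw [iUnion_sub, sub_iUnion, conicHull_sub_conicHull]
  exact isClosed_iUnion_of_finite fun k => isClosed_iUnion_of_finite fun l => isClosed_conicHull _

end ConicHull

lemma exists_pos_le_norm_sub_of_isClosed_sub {E : Type*} [SeminormedAddCommGroup E]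
    {A B : Set E} (hAB : IsClosed (A - B)) (hdisj : Disjoint A B) :
    ∃ d > 0, ∀ x ∈ A, ∀ y ∈ B, d ≤ ‖x - y‖ := by
  obtain ⟨d, hd, hball⟩ := Metric.isOpen_iff.mp hAB.isOpen_compl 0
    fun h => zero_mem_sub_iff.mp h hdisj
  refine ⟨d, hd, fun x hx y hy => not_lt.mp fun hlt => hball ?_ (sub_mem_sub hx hy)⟩
  rwa [Metric.mem_ball, dist_zero_right]

lemma vec3_eq_iff {x y : V} : x = y ↔ x 0 = y 0 ∧ x 1 = y 1 ∧ x 2 = y 2 := by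
  simp [funext_iff, Fin.forall_fin_succ]

section CrookedPlaneCones

open Matrix

lemma conicHull_upper_stem :
    conicHull ![![0, 1, 1], ![0, -1, 1], 0] = {u : V | u 0 = 0 ∧ |u 1| ≤ u 2} := by
  ext x
  simp only [mem_conicHull_three, vec3_eq_iff, Pi.add_apply, Pi.smul_apply, smul_eq_mul,
    Pi.zero_apply, cons_val_zero, cons_val_one, cons_val_two, head_cons, tail_cons, mem_ofPred_eq,
    abs_le]
  constructor
  · rintro ⟨r, s, t, hr, hs, -, h0, h1, h2⟩
    exact ⟨by linarith, by linarith, by linarith⟩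
  · rintro ⟨h0, h1, h2⟩
    exact ⟨(x 2 + x 1) / 2, (x 2 - x 1) / 2, 0, by linarith, by linarith, le_rfl,
      by linarith, by linarith, by linarith⟩

lemma conicHull_lower_stem :
    conicHull ![![0, 1, -1], ![0, -1, -1], 0] = {u : V | u 0 = 0 ∧ |u 1| ≤ -u 2} := by
  ext x
  simp only [mem_conicHull_three, vec3_eq_iff, Pi.add_apply, Pi.smul_apply, smul_eq_mul,
    Pi.zero_apply, cons_val_zero, cons_val_one, cons_val_two, head_cons, tail_cons, mem_ofPred_eq,
    abs_le]
  constructor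
  · rintro ⟨r, s, t, hr, hs, -, h0, h1, h2⟩
    exact ⟨by linarith, by linarith, by linarith⟩
  · rintro ⟨h0, h1, h2⟩
    exact ⟨(x 1 - x 2) / 2, (-x 2 - x 1) / 2, 0, by linarith, by linarith, le_rfl,
      by linarith, by linarith, by linarith⟩

lemma conicHull_left_wing :
    conicHull ![![-1, 0, 0], ![0, 1, 1], ![0, -1, -1]] = {u : V | u 0 ≤ 0 ∧ u 1 = u 2} := by
  ext x
  simp only [mem_conicHull_three, vec3_eq_iff, Pi.add_apply, Pi.smul_apply, smul_eq_mul,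
    cons_val_zero, cons_val_one, cons_val_two, head_cons, tail_cons, mem_ofPred_eq]
  constructor
  · rintro ⟨r, s, t, hr, -, -, h0, h1, h2⟩
    exact ⟨by linarith, by linarith⟩
  · rintro ⟨h0, h1⟩
    rcases le_total 0 (x 1) with h | h
    · exact ⟨-x 0, x 1, 0, by linarith, h, le_rfl, by linarith, by linarith, by linarith⟩
    · exact ⟨-x 0, 0, -x 1, by linarith, le_rfl, by linarith, by linarith, by linarith,
        by linarith⟩

lemma conicHull_right_wing :
    conicHull ![![1, 0, 0], ![0, 1, -1], ![0, -1, 1]] = {u : V | 0 ≤ u 0 ∧ u 1 = -u 2} := by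
  ext x
  simp only [mem_conicHull_three, vec3_eq_iff, Pi.add_apply, Pi.smul_apply, smul_eq_mul,
    cons_val_zero, cons_val_one, cons_val_two, head_cons, tail_cons, mem_ofPred_eq]
  constructor
  · rintro ⟨r, s, t, hr, -, -, h0, h1, h2⟩
    exact ⟨by linarith, by linarith⟩
  · rintro ⟨h0, h1⟩
    rcases le_total 0 (x 1) with h | h
    · exact ⟨x 0, x 1, 0, h0, h, le_rfl, by linarith, by linarith, by linarith⟩
    · exact ⟨x 0, 0, -x 1, h0, le_rfl, by linarith, by linarith, by linarith, by linarith⟩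

def crookedGenerators : Fin 4 → Fin 3 → V :=
  ![![![0, 1, 1], ![0, -1, 1], 0], ![![0, 1, -1], ![0, -1, -1], 0],
    ![![-1, 0, 0], ![0, 1, 1], ![0, -1, -1]], ![![1, 0, 0], ![0, 1, -1], ![0, -1, 1]]]

lemma C0_eq_iUnion_conicHull : C0 = ⋃ k, conicHull (crookedGenerators k) := by
  ext x
  simp only [mem_iUnion, Fin.exists_fin_succ, crookedGenerators, cons_val_zero, cons_val_succ,
    IsEmpty.exists_iff, or_false]
  rw [conicHull_upper_stem, conicHull_lower_stem, conicHull_left_wing, conicHull_right_wing]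
  simp only [C0, mem_union, mem_ofPred_eq, le_abs]
  tauto

end CrookedPlaneCones

lemma image_C0_eq_vadd_iUnion_conicHull (p : V) (g : V →ₗ[ℝ] V) :
    (fun x => p + g x) '' C0 = p +ᵥ ⋃ k, conicHull (g ∘ crookedGenerators k) := by
  simp_rw [← image_conicHull, ← image_iUnion, ← C0_eq_iUnion_conicHull, ← image_vadd,
    image_image]
  rfl

lemma isClosed_image_C0_sub_image_C0 (p q : V) (g g' : V →ₗ[ℝ] V) :
    IsClosed ((fun x => p + g x) '' C0 - (fun x => q + g' x) '' C0) := by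
  rw [image_C0_eq_vadd_iUnion_conicHull, image_C0_eq_vadd_iUnion_conicHull, vadd_sub_vadd_comm]
  exact (isClosed_iUnion_conicHull_sub_iUnion_conicHull _ _).vadd _

lemma norm_le_eunorm (v : V) : ‖v‖ ≤ eunorm v := by
  refine (pi_norm_le_iff_of_nonneg (Real.sqrt_nonneg _)).mpr fun i => ?_
  rw [Real.norm_eq_abs]
  apply Real.abs_le_sqrt
  fin_cases i <;> simp <;> linarith [sq_nonneg (v 0), sq_nonneg (v 1), sq_nonneg (v 2)]

/-- disjoint crooked planes are uniformly separated: the Euclidean distance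
between them is strictly positive. -/
theorem stmt19 (S T : Set V) (hS : IsCrookedPlane S) (hT : IsCrookedPlane T)
    (hdisj : Disjoint S T) :
    ∃ d : ℝ, 0 < d ∧ ∀ x ∈ S, ∀ y ∈ T, d ≤ ρ x y := by
  obtain ⟨g, p, -, rfl⟩ := hS
  obtain ⟨g', q, -, rfl⟩ := hT
  obtain ⟨d, hd, hsep⟩ := exists_pos_le_norm_sub_of_isClosed_sub
    (isClosed_image_C0_sub_image_C0 p q g g') hdisj
  exact ⟨d, hd, fun x hx y hy => (hsep x hx y hy).trans (norm_le_eunorm _)⟩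
end
end
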